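/- arXiv:1509.02366 — 13 statements merged into one kernel-verified Lean document; each statement's English description precedes it below -/
import Mathlib

section
/- Let V : ℝⁿ → ℝ be continuous, positive semidefinite (V(x) ≥ 0 for all x) and radially unbounded (V(x) → ∞ as ‖x‖₂ → ∞). Let x : ℕ → ℝⁿ, u : ℕ → ℝᵐ, y : ℕ → ℝᵐ be discrete-time state, input, and output sequences, let ν, ρ, α, κ, B₁, B₂ > 0, N₀ ∈ ℕ with N₀ ≥ 1, and let k ∈ ℕ be the initial time step. Assume: (a) the very strict quasi-passivity inequality V(x[i+1]) − V(x[i]) ≤ u[i]ᵀy[i] − ν‖u[i]‖₂² − ρ‖y[i]‖₂² + α holds for all i ≥ k; (b) the strong finite-time detectability inequality Σ_{i=s}^{s+N₀−1} ‖y[i]‖₂² ≥ κ‖x[s]‖₂² holds for all s ≥ k; (c) ‖u[i]‖₂ ≤ B₁ for all i ≥ k; (d) ‖x[k]‖₂ ≤ B₂. Then the state is ultimately bounded: there exists D > 0 such that ‖x[s]‖₂ ≤ D for all s ≥ k. -/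
/-!
By Young's inequality, bounded inputs turn quasi-passivity into
`V(x[i+1]) + (ρ/2)‖y[i]‖² ≤ V(x[i]) + C` with `C = B₁²/(2ρ) + α`. Summed over a detectability window of length `N₀`
this gives `V(x[t+N₀]) ≤ V(x[t]) - (ρκ/2)‖x[t]‖² + N₀C`, so `V` cannot increase over a window
unless `x[t]` lies in a fixed ball, on which `V` is bounded by continuity. Hence `V(x[s])` stays
below a constant, and radial unboundedness bounds `‖x[s]‖`.
-/

open scoped RealInnerProductSpace

theorem real_inner_le_half_mul_sq_add {F : Type*} [NormedAddCommGroup F] [InnerProductSpace ℝ F]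
    {u y : F} {B ρ : ℝ} (hρ : 0 < ρ) (hu : ‖u‖ ≤ B) :
    ⟪u, y⟫ ≤ ρ / 2 * ‖y‖ ^ 2 + B ^ 2 / (2 * ρ) := by
  have hyoung : 2 * ρ * (B * ‖y‖) ≤ ρ ^ 2 * ‖y‖ ^ 2 + B ^ 2 := by
    nlinarith [sq_nonneg (ρ * ‖y‖ - B)]
  calc ⟪u, y⟫ ≤ ‖u‖ * ‖y‖ := real_inner_le_norm u y
    _ ≤ B * ‖y‖ := by gcongr
    _ ≤ ρ / 2 * ‖y‖ ^ 2 + B ^ 2 / (2 * ρ) := by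
      rw [show ρ / 2 * ‖y‖ ^ 2 + B ^ 2 / (2 * ρ) = (ρ ^ 2 * ‖y‖ ^ 2 + B ^ 2) / (2 * ρ) by
        field_simp, le_div_iff₀ (by positivity)]
      linarith

theorem add_sum_le_of_forall_succ_add_le {v w : ℕ → ℝ} {C : ℝ} {k : ℕ}
    (h : ∀ i, k ≤ i → v (i + 1) + w i ≤ v i + C) {s : ℕ} (hs : k ≤ s) (N : ℕ) :
    v (s + N) + ∑ i ∈ Finset.range N, w (s + i) ≤ v s + N * C := by
  induction N with
  | zero => simp
  | succ N ih =>
    have := h (s + N) (by omega)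
    rw [Finset.sum_range_succ, ← add_assoc s N 1]
    push_cast
    linarith

theorem le_of_forall_add_le_max {v : ℕ → ℝ} {K : ℝ} {k N : ℕ} (hN : 0 < N)
    (hinit : ∀ d < N, v (k + d) ≤ K) (hstep : ∀ t, k ≤ t → v (t + N) ≤ max K (v t)) :
    ∀ s, k ≤ s → v s ≤ K := by
  intro s
  induction s using Nat.strong_induction_on with
  | _ s ih =>
    intro hs
    by_cases hsN : s < k + N
    · simpa [Nat.add_sub_cancel' hs] using hinit (s - k) (by omega)
    · obtain ⟨t, rfl⟩ : ∃ t, s = t + N := ⟨s - N, by omega⟩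
      exact (hstep t (by omega)).trans (max_le le_rfl (ih t (by omega) (by omega)))

theorem exists_forall_sub_mul_sq_add_le_max {E : Type*} [NormedAddCommGroup E] [ProperSpace E]
    {V : E → ℝ} (hV : Continuous V) {c : ℝ} (hc : 0 < c) (D : ℝ) :
    ∃ M, ∀ z, V z - c * ‖z‖ ^ 2 + D ≤ max M (V z) := by
  obtain ⟨M, hM⟩ := (isCompact_closedBall (0 : E) √(D / c)).bddAbove_image hV.continuousOn
  refine ⟨M + D, fun z => ?_⟩
  by_cases hz : D ≤ c * ‖z‖ ^ 2
  · exact le_max_of_le_right (by linarith)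
  · have hzR : ‖z‖ ≤ √(D / c) :=
      Real.le_sqrt_of_sq_le ((le_div_iff₀ hc).2 (by linarith))
    have hVz : V z ≤ M := hM ⟨z, by simpa using hzR, rfl⟩
    exact le_max_of_le_left (by nlinarith [sq_nonneg ‖z‖])

theorem exists_pos_forall_norm_le_of_le {E : Type*} [NormedAddCommGroup E] {V : E → ℝ}
    (hV : ∀ M : ℝ, ∃ r : ℝ, ∀ z, r ≤ ‖z‖ → M ≤ V z) (K : ℝ) :
    ∃ D > 0, ∀ z, V z ≤ K → ‖z‖ ≤ D := by
  obtain ⟨r, hr⟩ := hV (K + 1)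
  refine ⟨max r 1, by positivity, fun z hz => ?_⟩
  by_contra! hlt
  linarith [hr z ((le_max_left r 1).trans hlt.le)]

theorem stmt_0_general {n m : ℕ} (V : EuclideanSpace ℝ (Fin n) → ℝ)
    (hVcont : Continuous V)
    (hVrad : ∀ M : ℝ, ∃ r : ℝ, ∀ z, r ≤ ‖z‖ → M ≤ V z)
    (x : ℕ → EuclideanSpace ℝ (Fin n)) (u y : ℕ → EuclideanSpace ℝ (Fin m))
    (ν ρ α κ B₁ : ℝ) (hν : 0 < ν) (hρ : 0 < ρ) (hα : 0 < α) (hκ : 0 < κ)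
    (N₀ : ℕ) (hN₀ : 1 ≤ N₀) (k : ℕ)
    (hdiss : ∀ i, k ≤ i →
      V (x (i + 1)) - V (x i) ≤ ⟪u i, y i⟫ - ν * ‖u i‖ ^ 2 - ρ * ‖y i‖ ^ 2 + α)
    (hdet : ∀ s, k ≤ s → κ * ‖x s‖ ^ 2 ≤ ∑ i ∈ Finset.range N₀, ‖y (s + i)‖ ^ 2)
    (hu : ∀ i, k ≤ i → ‖u i‖ ≤ B₁) :
    ∃ D > 0, ∀ s, k ≤ s → ‖x s‖ ≤ D := by
  set C := B₁ ^ 2 / (2 * ρ) + α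
  have hC : 0 ≤ C := by positivity
  have hstep : ∀ i, k ≤ i → V (x (i + 1)) + ρ / 2 * ‖y i‖ ^ 2 ≤ V (x i) + C := fun i hi => by
    linarith [hdiss i hi, real_inner_le_half_mul_sq_add (y := y i) hρ (hu i hi),
      mul_nonneg hν.le (sq_nonneg ‖u i‖)]
  have hwin {s : ℕ} (hs : k ≤ s) (N : ℕ) :
      V (x (s + N)) + ρ / 2 * ∑ i ∈ Finset.range N, ‖y (s + i)‖ ^ 2 ≤ V (x s) + N * C := by
    simpa only [Finset.mul_sum] using
      add_sum_le_of_forall_succ_add_le (v := fun i => V (x i)) (w := fun i => ρ / 2 * ‖y i‖ ^ 2)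
        hstep hs N
  obtain ⟨M, hM⟩ := exists_forall_sub_mul_sq_add_le_max hVcont
    (show 0 < ρ * κ / 2 by positivity) (N₀ * C)
  have hbound : ∀ s, k ≤ s → V (x s) ≤ max M (V (x k) + N₀ * C) := by
    refine le_of_forall_add_le_max hN₀ (fun d hd => ?_) (fun t ht => ?_)
    · have hsum : 0 ≤ ρ / 2 * ∑ i ∈ Finset.range d, ‖y (k + i)‖ ^ 2 := by positivity
      have hdC : (d : ℝ) * C ≤ N₀ * C := by gcongr
      linarith [hwin le_rfl d, le_max_right M (V (x k) + N₀ * C)]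
    · calc V (x (t + N₀)) ≤ V (x t) - ρ * κ / 2 * ‖x t‖ ^ 2 + N₀ * C := by
            have hdet_t := mul_le_mul_of_nonneg_left (hdet t ht) (by positivity : 0 ≤ ρ / 2)
            linarith [hwin ht N₀]
        _ ≤ max M (V (x t)) := hM (x t)
        _ ≤ max (max M (V (x k) + N₀ * C)) (V (x t)) := max_le_max (le_max_left _ _) le_rfl
  obtain ⟨D, hD, hDV⟩ := exists_pos_forall_norm_le_of_le hVrad (max M (V (x k) + N₀ * C))
  exact ⟨D, hD, fun s hs => hDV _ (hbound s hs)⟩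

/-- Ultimate boundedness of a strongly finite-time detectable, very strictly
quasi-passive discrete-time system with bounded input and bounded initial state. -/
theorem stmt_0 {n m : ℕ} (V : EuclideanSpace ℝ (Fin n) → ℝ)
    (hVcont : Continuous V) (hVpos : ∀ z, 0 ≤ V z)
    (hVrad : ∀ M : ℝ, ∃ r : ℝ, ∀ z, r ≤ ‖z‖ → M ≤ V z)
    (x : ℕ → EuclideanSpace ℝ (Fin n)) (u y : ℕ → EuclideanSpace ℝ (Fin m))
    (ν ρ α κ B₁ B₂ : ℝ) (hν : 0 < ν) (hρ : 0 < ρ) (hα : 0 < α) (hκ : 0 < κ)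
    (hB₁ : 0 < B₁) (hB₂ : 0 < B₂) (N₀ : ℕ) (hN₀ : 1 ≤ N₀) (k : ℕ)
    (hdiss : ∀ i, k ≤ i →
      V (x (i + 1)) - V (x i) ≤ ⟪u i, y i⟫ - ν * ‖u i‖ ^ 2 - ρ * ‖y i‖ ^ 2 + α)
    (hdet : ∀ s, k ≤ s → κ * ‖x s‖ ^ 2 ≤ ∑ i ∈ Finset.range N₀, ‖y (s + i)‖ ^ 2)
    (hu : ∀ i, k ≤ i → ‖u i‖ ≤ B₁) (hx : ‖x k‖ ≤ B₂) :
    ∃ D > 0, ∀ s, k ≤ s → ‖x s‖ ≤ D :=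
  stmt_0_general V hVcont hVrad x u y ν ρ α κ B₁ hν hρ hα hκ N₀ hN₀ k hdiss hdet hu
end

section
/- Let V : ℝⁿ → ℝ be continuous, positive semidefinite and radially unbounded. Let x : ℕ → ℝⁿ, y : ℕ → ℝᵐ be discrete-time state and output sequences, let ρ, α, κ, B₂ > 0, N₀ ∈ ℕ with N₀ ≥ 1, and let k ∈ ℕ be the initial time step. Assume: (a) V(x[i+1]) − V(x[i]) ≤ −ρ‖y[i]‖₂² + α for all i ≥ k; (b) the strong finite-time detectability inequality Σ_{i=s}^{s+N₀−1} ‖y[i]‖₂² ≥ κ‖x[s]‖₂² holds for all s ≥ k; (c) ‖x[k]‖₂ ≤ B₂. Then there exists D > 0 such that ‖x[s]‖₂ ≤ D for all s ≥ k. -/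
/-!
Summing the dissipation inequality over a detectability window of length `N₀` gives
`V (x (s + N₀)) ≤ V (x s) - ρ κ ‖x s‖² + N₀ α`. So `V` cannot grow over a window that starts
outside the ball `ρ κ ‖z‖² ≤ N₀ α`, and over a window that starts inside it `V` stays below
its maximum on that compact ball plus `N₀ α`. Hence `V ∘ x` is bounded, and radial
unboundedness of `V` turns this into a bound on `x`.
-/

open Finset

section Sequences

variable {v w : ℕ → ℝ} {ρ α : ℝ} {k s : ℕ}

theorem le_sub_mul_sum_add_of_succ_sub_le (h : ∀ i, k ≤ i → v (i + 1) - v i ≤ -ρ * w i + α)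
    (hs : k ≤ s) (j : ℕ) :
    v (s + j) ≤ v s - ρ * ∑ i ∈ range j, w (s + i) + j * α := by
  have htele := sum_range_sub (fun i => v (s + i)) j
  simp only [add_zero] at htele
  have hsum : ∑ i ∈ range j, (v (s + (i + 1)) - v (s + i)) ≤
      ∑ i ∈ range j, (-ρ * w (s + i) + α) :=
    sum_le_sum fun i _ => h (s + i) (by omega)
  simp only [sum_add_distrib, ← mul_sum, sum_const, card_range, nsmul_eq_mul] at hsum
  linarith

theorem le_add_mul_of_succ_sub_le (hρ : 0 ≤ ρ) (hw : ∀ i, 0 ≤ w i)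
    (h : ∀ i, k ≤ i → v (i + 1) - v i ≤ -ρ * w i + α) (hs : k ≤ s) (j : ℕ) :
    v (s + j) ≤ v s + j * α := by
  have := le_sub_mul_sum_add_of_succ_sub_le h hs j
  have := mul_nonneg hρ (sum_nonneg fun i (_ : i ∈ range j) => hw (s + i))
  linarith

theorem le_of_le_max_of_window {N : ℕ} (hN : 0 < N) {C : ℝ} (hinit : ∀ j < N, v (k + j) ≤ C)
    (hstep : ∀ s, k ≤ s → v (s + N) ≤ max (v s) C) : ∀ s, k ≤ s → v s ≤ C := by
  intro s
  induction s using Nat.strong_induction_on with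
  | _ s ih =>
    intro hs
    by_cases hsN : s < k + N
    · simpa [Nat.add_sub_cancel' hs] using hinit (s - k) (by omega)
    · have hstep' := hstep (s - N) (by omega)
      rw [Nat.sub_add_cancel (by omega)] at hstep'
      exact hstep'.trans (max_le (ih (s - N) (by omega) (by omega)) le_rfl)

end Sequences

section Storage

variable {E F : Type*}

theorem exists_forall_le_of_mul_norm_sq_le [NormedAddCommGroup E] [ProperSpace E] {V : E → ℝ}
    (hV : Continuous V) {a : ℝ} (ha : 0 < a) (c : ℝ) :
    ∃ M, ∀ z, a * ‖z‖ ^ 2 ≤ c → V z ≤ M := by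
  obtain ⟨M, hM⟩ := (isCompact_closedBall (0 : E) √(c / a)).bddAbove_image hV.continuousOn
  refine ⟨M, fun z hz => hM ⟨z, ?_, rfl⟩⟩
  have hz' : ‖z‖ ^ 2 ≤ c / a := by rw [le_div_iff₀ ha]; linarith
  simpa using Real.abs_le_sqrt hz'

theorem exists_norm_le_of_radially_unbounded [Norm E] {V : E → ℝ}
    (hV : ∀ M : ℝ, ∃ r : ℝ, ∀ z, r ≤ ‖z‖ → M ≤ V z) (M : ℝ) :
    ∃ D > 0, ∀ z, V z ≤ M → ‖z‖ ≤ D := by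
  obtain ⟨r, hr⟩ := hV (M + 1)
  refine ⟨max r 1, by positivity, fun z hz => ?_⟩
  by_contra! hlt
  linarith [hr z ((le_max_left r 1).trans hlt.le)]

theorem le_max_of_dissipation_of_detectability [Norm E] [Norm F] {V : E → ℝ} {x : ℕ → E}
    {y : ℕ → F} {ρ α κ M : ℝ} {N k s : ℕ} (hρ : 0 ≤ ρ)
    (hdiss : ∀ i, k ≤ i → V (x (i + 1)) - V (x i) ≤ -ρ * ‖y i‖ ^ 2 + α)
    (hdet : ∀ s, k ≤ s → κ * ‖x s‖ ^ 2 ≤ ∑ i ∈ range N, ‖y (s + i)‖ ^ 2)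
    (hM : ∀ z, ρ * κ * ‖z‖ ^ 2 ≤ N * α → V z ≤ M) (hs : k ≤ s) :
    V (x (s + N)) ≤ max (V (x s)) (M + N * α) := by
  by_cases hsmall : ρ * κ * ‖x s‖ ^ 2 ≤ N * α
  · have := le_add_mul_of_succ_sub_le (v := fun i => V (x i)) hρ (fun i => sq_nonneg ‖y i‖)
      hdiss hs N
    exact le_max_of_le_right (by linarith [hM _ hsmall])
  · have hwin := le_sub_mul_sum_add_of_succ_sub_le (v := fun i => V (x i)) hdiss hs N
    have := mul_le_mul_of_nonneg_left (hdet s hs) hρ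
    exact le_max_of_le_left (by linarith)

end Storage

theorem stmt_1_general {n m : ℕ} (V : EuclideanSpace ℝ (Fin n) → ℝ)
    (hVcont : Continuous V)
    (hVrad : ∀ M : ℝ, ∃ r : ℝ, ∀ z, r ≤ ‖z‖ → M ≤ V z)
    (x : ℕ → EuclideanSpace ℝ (Fin n)) (y : ℕ → EuclideanSpace ℝ (Fin m))
    (ρ α κ : ℝ) (hρ : 0 < ρ) (hα : 0 < α) (hκ : 0 < κ)
    (N₀ : ℕ) (hN₀ : 1 ≤ N₀) (k : ℕ)
    (hdiss : ∀ i, k ≤ i → V (x (i + 1)) - V (x i) ≤ -ρ * ‖y i‖ ^ 2 + α)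
    (hdet : ∀ s, k ≤ s → κ * ‖x s‖ ^ 2 ≤ ∑ i ∈ Finset.range N₀, ‖y (s + i)‖ ^ 2) :
    ∃ D > 0, ∀ s, k ≤ s → ‖x s‖ ≤ D := by
  obtain ⟨M, hM⟩ := exists_forall_le_of_mul_norm_sq_le hVcont (mul_pos hρ hκ) (N₀ * α)
  set C := max (V (x k)) M + N₀ * α
  have hinit : ∀ j < N₀, V (x (k + j)) ≤ C := fun j hj => by
    have := le_add_mul_of_succ_sub_le (v := fun i => V (x i)) hρ.le
      (fun i => sq_nonneg ‖y i‖) hdiss le_rfl j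
    have : (j : ℝ) * α ≤ N₀ * α := by gcongr
    linarith [le_max_left (V (x k)) M]
  have hstep : ∀ s, k ≤ s → V (x (s + N₀)) ≤ max (V (x s)) C := fun s hs =>
    (le_max_of_dissipation_of_detectability hρ.le hdiss hdet hM hs).trans
      (max_le_max le_rfl (by linarith [le_max_right (V (x k)) M]))
  obtain ⟨D, hD, hVD⟩ := exists_norm_le_of_radially_unbounded hVrad C
  exact ⟨D, hD, fun s hs =>
    hVD _ (le_of_le_max_of_window (v := fun i => V (x i)) hN₀ hinit hstep s hs)⟩

/-- Ultimate boundedness of a strongly finite-time detectable discrete-time system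
whose storage function decreases up to `-ρ‖y‖² + α`. -/
theorem stmt_1 {n m : ℕ} (V : EuclideanSpace ℝ (Fin n) → ℝ)
    (hVcont : Continuous V) (hVpos : ∀ z, 0 ≤ V z)
    (hVrad : ∀ M : ℝ, ∃ r : ℝ, ∀ z, r ≤ ‖z‖ → M ≤ V z)
    (x : ℕ → EuclideanSpace ℝ (Fin n)) (y : ℕ → EuclideanSpace ℝ (Fin m))
    (ρ α κ B₂ : ℝ) (hρ : 0 < ρ) (hα : 0 < α) (hκ : 0 < κ) (hB₂ : 0 < B₂)
    (N₀ : ℕ) (hN₀ : 1 ≤ N₀) (k : ℕ)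
    (hdiss : ∀ i, k ≤ i → V (x (i + 1)) - V (x i) ≤ -ρ * ‖y i‖ ^ 2 + α)
    (hdet : ∀ s, k ≤ s → κ * ‖x s‖ ^ 2 ≤ ∑ i ∈ Finset.range N₀, ‖y (s + i)‖ ^ 2)
    (hx : ‖x k‖ ≤ B₂) :
    ∃ D > 0, ∀ s, k ≤ s → ‖x s‖ ≤ D :=
  stmt_1_general V hVcont hVrad x y ρ α κ hρ hα hκ N₀ hN₀ k hdiss hdet
end

section
/- Let V : ℝⁿ → ℝ, let x : ℕ → ℝⁿ, u : ℕ → ℝᵐ, y : ℕ → ℝᵐ, let ν, ρ, α, κ, B₁ > 0, N₀ ∈ ℕ with N₀ ≥ 1, and k ∈ ℕ. Assume: (a) V(x[i+1]) − V(x[i]) ≤ u[i]ᵀy[i] − ν‖u[i]‖₂² − ρ‖y[i]‖₂² + α for all i with k ≤ i ≤ k+N₀−1; (b) ‖u[i]‖₂ ≤ B₁ for all i with k ≤ i ≤ k+N₀−1; (c) Σ_{i=k}^{k+N₀−1} ‖y[i]‖₂² ≥ κ‖x[k]‖₂². Then V(x[k+N₀]) − V(x[k]) ≤ N₀(B₁²/(4ρ)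 + α) − (4ρ²νκ/(4ρν + 1))‖x[k]‖₂². -/
open scoped RealInnerProductSpace

lemma step_bound (ν ρ B₁ a b : ℝ) (hν : 0 < ν) (hρ : 0 < ρ) (ha0 : 0 ≤ a)
    (hab : a ≤ B₁) (hb : 0 ≤ b) :
    a * b - ν * a ^ 2 - ρ * b ^ 2 ≤
      B₁ ^ 2 / (4 * ρ) - 4 * ρ ^ 2 * ν / (4 * ρ * ν + 1) * b ^ 2 := by
  have h1 : (0:ℝ) < 4 * ρ := by linarith
  have h2 : (0:ℝ) < 4 * ρ * ν + 1 := by positivity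
  have ha2 : a ^ 2 ≤ B₁ ^ 2 := by nlinarith
  have heq : B₁ ^ 2 / (4 * ρ) - 4 * ρ ^ 2 * ν / (4 * ρ * ν + 1) * b ^ 2
      = ((4 * ρ * ν + 1) * B₁ ^ 2 - 16 * ρ ^ 3 * ν * b ^ 2) / (4 * ρ * (4 * ρ * ν + 1)) := by
    field_simp
    ring
  rw [heq, le_div_iff₀ (by positivity)]
  nlinarith [sq_nonneg ((4 * ρ * ν + 1) * a - 2 * ρ * b),
    mul_nonneg h2.le (sub_nonneg.2 ha2)]

/-- Decrease of the storage function over a detectability window of length `N₀`. -/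
theorem stmt_3 {n m : ℕ} (V : EuclideanSpace ℝ (Fin n) → ℝ)
    (x : ℕ → EuclideanSpace ℝ (Fin n)) (u y : ℕ → EuclideanSpace ℝ (Fin m))
    (ν ρ α κ B₁ : ℝ) (hν : 0 < ν) (hρ : 0 < ρ) (hα : 0 < α) (hκ : 0 < κ)
    (hB₁ : 0 < B₁) (N₀ : ℕ) (hN₀ : 1 ≤ N₀) (k : ℕ)
    (hdiss : ∀ i, k ≤ i → i ≤ k + N₀ - 1 →
      V (x (i + 1)) - V (x i) ≤ ⟪u i, y i⟫ - ν * ‖u i‖ ^ 2 - ρ * ‖y i‖ ^ 2 + α)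
    (hu : ∀ i, k ≤ i → i ≤ k + N₀ - 1 → ‖u i‖ ≤ B₁)
    (hdet : κ * ‖x k‖ ^ 2 ≤ ∑ i ∈ Finset.range N₀, ‖y (k + i)‖ ^ 2) :
    V (x (k + N₀)) - V (x k) ≤
      N₀ * (B₁ ^ 2 / (4 * ρ) + α) - 4 * ρ ^ 2 * ν * κ / (4 * ρ * ν + 1) * ‖x k‖ ^ 2 := by
  have hc : 0 < 4 * ρ ^ 2 * ν / (4 * ρ * ν + 1) := by positivity
  have htel : V (x (k + N₀)) - V (x k)
      = ∑ i ∈ Finset.range N₀, (V (x (k + i + 1)) - V (x (k + i))) := by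
    have := Finset.sum_range_sub (fun i => V (x (k + i))) N₀
    simpa [add_assoc] using this.symm
  have hstep : ∀ i ∈ Finset.range N₀,
      V (x (k + i + 1)) - V (x (k + i)) ≤
        (B₁ ^ 2 / (4 * ρ) + α) - 4 * ρ ^ 2 * ν / (4 * ρ * ν + 1) * ‖y (k + i)‖ ^ 2 := by
    intro i hi
    simp only [Finset.mem_range] at hi
    have h1 : k ≤ k + i := Nat.le_add_right _ _
    have h2 : k + i ≤ k + N₀ - 1 := by omega
    have hd := hdiss (k + i) h1 h2
    have hub := hu (k + i) h1 h2
    have hinner : ⟪u (k + i), y (k + i)⟫ ≤ ‖u (k + i)‖ * ‖y (k + i)‖ :=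
      real_inner_le_norm _ _
    have := step_bound ν ρ B₁ (‖u (k + i)‖) (‖y (k + i)‖) hν hρ (norm_nonneg _)
      hub (norm_nonneg _)
    linarith
  calc V (x (k + N₀)) - V (x k)
      ≤ ∑ i ∈ Finset.range N₀, ((B₁ ^ 2 / (4 * ρ) + α)
          - 4 * ρ ^ 2 * ν / (4 * ρ * ν + 1) * ‖y (k + i)‖ ^ 2) := by
        rw [htel]; exact Finset.sum_le_sum hstep
    _ = N₀ * (B₁ ^ 2 / (4 * ρ) + α)
          - 4 * ρ ^ 2 * ν / (4 * ρ * ν + 1) * ∑ i ∈ Finset.range N₀, ‖y (k + i)‖ ^ 2 := by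
        rw [Finset.sum_sub_distrib, Finset.sum_const, nsmul_eq_mul, ← Finset.mul_sum, Finset.card_range]
    _ ≤ N₀ * (B₁ ^ 2 / (4 * ρ) + α) - 4 * ρ ^ 2 * ν * κ / (4 * ρ * ν + 1) * ‖x k‖ ^ 2 := by
        have : 4 * ρ ^ 2 * ν * κ / (4 * ρ * ν + 1) * ‖x k‖ ^ 2
            = 4 * ρ ^ 2 * ν / (4 * ρ * ν + 1) * (κ * ‖x k‖ ^ 2) := by ring
        rw [this]
        have := mul_le_mul_of_nonneg_left hdet (le_of_lt hc)
        linarith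
end

section
/- Let τ, γ > 0, a ∈ ℝ, c ∈ ℝᵐ, λ₁ > 0, and let y : ℝ → ℝᵐ be continuous on [a, a+τ] with ‖y(t) − y(a)‖₂ ≤ τ γ ‖c‖₂ for all t ∈ [a, a+τ]. Then |∫_a^{a+τ} ‖y(t)‖₂² dt − τ ‖y(a)‖₂²| ≤ τ³ γ² ‖c‖₂² + τ² γ (‖y(a)‖₂²/λ₁ + λ₁ ‖c‖₂²). -/
/-- Bound on the deviation of `∫ ‖y‖²` from its sampled value `τ ‖y(a)‖²`. -/
theorem stmt_6 {m : ℕ} (τ γ : ℝ) (hτ : 0 < τ) (hγ : 0 < γ) (a : ℝ)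
    (c : EuclideanSpace ℝ (Fin m)) (lam₁ : ℝ) (hlam₁ : 0 < lam₁)
    (y : ℝ → EuclideanSpace ℝ (Fin m))
    (hcont : ContinuousOn y (Set.Icc a (a + τ)))
    (hdev : ∀ t ∈ Set.Icc a (a + τ), ‖y t - y a‖ ≤ τ * γ * ‖c‖) :
    |(∫ t in a..(a + τ), ‖y t‖ ^ 2) - τ * ‖y a‖ ^ 2| ≤
      τ ^ 3 * γ ^ 2 * ‖c‖ ^ 2 + τ ^ 2 * γ * (‖y a‖ ^ 2 / lam₁ + lam₁ * ‖c‖ ^ 2) := by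
  have hle : a ≤ a + τ := by linarith
  set C : ℝ := τ ^ 2 * γ ^ 2 * ‖c‖ ^ 2 + τ * γ * (‖y a‖ ^ 2 / lam₁ + lam₁ * ‖c‖ ^ 2)
    with hCdef
  have hamgm : 2 * ‖y a‖ * ‖c‖ ≤ ‖y a‖ ^ 2 / lam₁ + lam₁ * ‖c‖ ^ 2 := by
    have h : ‖y a‖ ^ 2 / lam₁ + lam₁ * ‖c‖ ^ 2 - 2 * ‖y a‖ * ‖c‖
        = (‖y a‖ - lam₁ * ‖c‖) ^ 2 / lam₁ := by
      field_simp; ring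
    nlinarith [div_nonneg (sq_nonneg (‖y a‖ - lam₁ * ‖c‖)) hlam₁.le]
  have hpt : ∀ t ∈ Set.Icc a (a + τ), |‖y t‖ ^ 2 - ‖y a‖ ^ 2| ≤ C := by
    intro t ht
    have hd := hdev t ht
    have h1 : |‖y t‖ - ‖y a‖| ≤ ‖y t - y a‖ := abs_norm_sub_norm_le _ _
    have h1' : |‖y t‖ - ‖y a‖| ≤ τ * γ * ‖c‖ := h1.trans hd
    rw [abs_le] at h1' ⊢
    have hu : (0:ℝ) ≤ ‖y t‖ := norm_nonneg _
    have hv : (0:ℝ) ≤ ‖y a‖ := norm_nonneg _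
    have hτγ : 0 < τ * γ := mul_pos hτ hγ
    have hd0 : (0:ℝ) ≤ τ * γ * ‖c‖ := by positivity
    have htgc : τ * γ * (2 * ‖y a‖ * ‖c‖) ≤ τ * γ * (‖y a‖ ^ 2 / lam₁ + lam₁ * ‖c‖ ^ 2) :=
      mul_le_mul_of_nonneg_left hamgm hτγ.le
    have h2 : (0:ℝ) ≤ (τ * γ * ‖c‖ - (‖y a‖ - ‖y t‖)) * (‖y a‖ + ‖y t‖) :=
      mul_nonneg (by linarith [h1'.1]) (by positivity)
    have h2' : (0:ℝ) ≤ (τ * γ * ‖c‖ - (‖y t‖ - ‖y a‖)) * (‖y a‖ + ‖y t‖) :=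
      mul_nonneg (by linarith [h1'.2]) (by positivity)
    have h3 : (0:ℝ) ≤ (τ * γ * ‖c‖) * (‖y a‖ + τ * γ * ‖c‖ - ‖y t‖) :=
      mul_nonneg hd0 (by linarith [h1'.2])
    rw [hCdef]
    constructor
    · nlinarith [h2, h3, htgc]
    · nlinarith [h2', h3, htgc]
  have hint : IntervalIntegrable (fun t => ‖y t‖ ^ 2) MeasureTheory.volume a (a + τ) := by
    apply ContinuousOn.intervalIntegrable
    rw [Set.uIcc_of_le hle]
    exact (hcont.norm.pow 2)
  have heq : (∫ t in a..(a + τ), ‖y t‖ ^ 2) - τ * ‖y a‖ ^ 2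
      = ∫ t in a..(a + τ), (‖y t‖ ^ 2 - ‖y a‖ ^ 2) := by
    rw [intervalIntegral.integral_sub hint intervalIntegrable_const,
      intervalIntegral.integral_const]
    rw [smul_eq_mul]; ring
  rw [heq]
  have hbound : ‖∫ t in a..(a + τ), (‖y t‖ ^ 2 - ‖y a‖ ^ 2)‖ ≤ C * |a + τ - a| := by
    apply intervalIntegral.norm_integral_le_of_norm_le_const
    intro x hx
    rw [Set.uIoc_of_le hle] at hx
    exact hpt x (Set.mem_Icc.mpr ⟨hx.1.le, hx.2⟩)
  rw [Real.norm_eq_abs] at hbound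
  have : |a + τ - a| = τ := by rw [abs_of_nonneg] <;> linarith
  rw [this] at hbound
  calc |∫ t in a..(a + τ), (‖y t‖ ^ 2 - ‖y a‖ ^ 2)| ≤ C * τ := hbound
    _ = τ ^ 3 * γ ^ 2 * ‖c‖ ^ 2 + τ ^ 2 * γ * (‖y a‖ ^ 2 / lam₁ + lam₁ * ‖c‖ ^ 2) := by
        rw [hCdef]; ring
end

section
/- (Passivity degradation under time discretization.) Let τ, γ > 0, let ν, ρ ∈ ℝ, let λ₁ > 0, and let k ∈ ℕ. Let V : ℝⁿ → ℝ, x : ℝ → ℝⁿ, u, y : ℝ → ℝᵐ with y continuously differentiable on [kτ, (k+1)τ]. Assume: (a) u is constant on [kτ, (k+1)τ) with value u_k := u(kτ); (b) the gain inequality ∫_{kτ}^{t} ‖ẏ(s)‖₂² ds ≤ γ² (t − kτ) ‖u_k‖₂² holds for all t ∈ [kτ, (k+1)τ]; (c) the dissipation inequality V(x((k+1)τ)) − V(x(kτ)) ≤ ∫_{kτ}^{(k+1)τ} ( u(t)ᵀy(t) − ν‖u(t)‖₂² − ρ‖y(t)‖₂² ) dt holds. Then, writing x[k] := x(kτ),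 x[k+1] := x((k+1)τ), y[k] := y(kτ): V(x[k+1]) − V(x[k]) ≤ τ u_kᵀ y[k] − τ ν′ ‖u_k‖₂² − τ ρ′ ‖y[k]‖₂², where ν′ = ν − γτ(1 + λ₁|ρ|) − γ²τ²|ρ| and ρ′ = ρ − γτ|ρ|/λ₁. -/
open scoped RealInnerProductSpace

lemma stmt7_real_bound (γ τ ρ lam₁ U Y D P Q : ℝ) (hγ : 0 < γ) (hτ : 0 < τ)
    (hlam₁ : 0 < lam₁) (hU : 0 ≤ U) (hY : 0 ≤ Y) (hD : 0 ≤ D) (hDb : D ≤ γ * τ * U)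
    (hP : P ≤ U * D) (hQ : |Q| ≤ Y * D) :
    P - ρ * (2 * Q + D ^ 2) ≤
      (γ * τ * (1 + lam₁ * |ρ|) + γ ^ 2 * τ ^ 2 * |ρ|) * U ^ 2
        + γ * τ * |ρ| / lam₁ * Y ^ 2 := by
  have hγτ : 0 ≤ γ * τ := by positivity
  have hρ : 0 ≤ |ρ| := abs_nonneg ρ
  have h1 : P ≤ γ * τ * U ^ 2 := by nlinarith [mul_le_mul_of_nonneg_left hDb hU]
  have h2a : -(2 * (ρ * Q)) ≤ 2 * (|ρ| * (Y * D)) := by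
    have hn : -(ρ * Q) ≤ |ρ * Q| := neg_le_abs _
    rw [abs_mul] at hn
    have := mul_le_mul_of_nonneg_left hQ hρ
    linarith
  have h2b : 2 * (Y * D) ≤ γ * τ * (2 * (Y * U)) := by
    nlinarith [mul_le_mul_of_nonneg_left hDb hY]
  have h2c : 2 * (Y * U) ≤ lam₁ * U ^ 2 + Y ^ 2 / lam₁ := by
    rw [← sub_nonneg]
    have : lam₁ * U ^ 2 + Y ^ 2 / lam₁ - 2 * (Y * U) = (lam₁ * U - Y) ^ 2 / lam₁ := by
      field_simp; ring
    rw [this]; positivity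
  have h2d := mul_le_mul_of_nonneg_left h2c hγτ
  have h2e := mul_le_mul_of_nonneg_left (le_trans h2b h2d) hρ
  have hD2 : D ^ 2 ≤ (γ * τ * U) ^ 2 := by nlinarith
  have h3a : -(ρ * D ^ 2) ≤ |ρ| * D ^ 2 := by
    have := mul_le_mul_of_nonneg_right (neg_le_abs ρ) (sq_nonneg D)
    linarith
  have h3b := mul_le_mul_of_nonneg_left hD2 hρ
  have hfin : P - ρ * (2 * Q + D ^ 2) ≤
      γ * τ * U ^ 2 + |ρ| * (γ * τ * (lam₁ * U ^ 2 + Y ^ 2 / lam₁)) + |ρ| * (γ * τ * U) ^ 2 := by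
    nlinarith [h2e, h1, h3a, h3b, h2a]
  have heq : γ * τ * U ^ 2 + |ρ| * (γ * τ * (lam₁ * U ^ 2 + Y ^ 2 / lam₁)) + |ρ| * (γ * τ * U) ^ 2
      = (γ * τ * (1 + lam₁ * |ρ|) + γ ^ 2 * τ ^ 2 * |ρ|) * U ^ 2
        + γ * τ * |ρ| / lam₁ * Y ^ 2 := by
    field_simp
    ring
  linarith [hfin, heq.le, heq.ge]

lemma stmt7_dev {m : ℕ} (a b γ U : ℝ) (hγ : 0 < γ) (hU : 0 ≤ U)
    (hτ : 0 < b - a)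
    (y y' : ℝ → EuclideanSpace ℝ (Fin m))
    (hderiv : ∀ t ∈ Set.Icc a b, HasDerivAt y (y' t) t)
    (hy'cont : ContinuousOn y' (Set.Icc a b))
    (hgain : ∀ t ∈ Set.Icc a b, (∫ s in a..t, ‖y' s‖ ^ 2) ≤ γ ^ 2 * (t - a) * U ^ 2) :
    ∀ t ∈ Set.Icc a b, ‖y t - y a‖ ≤ γ * (t - a) * U := by
  intro t ht
  obtain ⟨hat, htb⟩ := ht
  have hsub : Set.Icc a t ⊆ Set.Icc a b := Set.Icc_subset_Icc le_rfl htb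
  have hy'c : ContinuousOn y' (Set.Icc a t) := hy'cont.mono hsub
  have hint : IntervalIntegrable y' MeasureTheory.volume a t := by
    apply ContinuousOn.intervalIntegrable
    rwa [Set.uIcc_of_le hat]
  have hftc : ∫ s in a..t, y' s = y t - y a := by
    apply intervalIntegral.integral_eq_sub_of_hasDerivAt _ hint
    intro s hs
    rw [Set.uIcc_of_le hat] at hs
    exact hderiv s (hsub hs)
  rw [← hftc]
  have hnorm : ‖∫ s in a..t, y' s‖ ≤ ∫ s in a..t, ‖y' s‖ :=
    intervalIntegral.norm_integral_le_integral_norm hat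
  have hIntn : IntervalIntegrable (fun s => ‖y' s‖) MeasureTheory.volume a t := by
    apply ContinuousOn.intervalIntegrable
    rw [Set.uIcc_of_le hat]; exact hy'c.norm
  have hIntn2 : IntervalIntegrable (fun s => ‖y' s‖ ^ 2) MeasureTheory.volume a t := by
    apply ContinuousOn.intervalIntegrable
    rw [Set.uIcc_of_le hat]
    exact hy'c.norm.pow 2
  have key : ∀ c : ℝ, 0 < c →
      (∫ s in a..t, ‖y' s‖) ≤ γ ^ 2 * (t - a) * U ^ 2 / (2 * c) + (t - a) * (c / 2) := by
    intro c hc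
    have h1 : (∫ s in a..t, ‖y' s‖) ≤ ∫ s in a..t, (‖y' s‖ ^ 2 / (2 * c) + c / 2) := by
      apply intervalIntegral.integral_mono_on hat hIntn
      · exact (hIntn2.div_const _).add intervalIntegrable_const
      · intro s _
        have h := sq_nonneg (‖y' s‖ - c)
        have hc2 : (0:ℝ) < 2 * c := by linarith
        rw [div_add_div _ _ (ne_of_gt hc2) (by norm_num : (2:ℝ) ≠ 0),
          le_div_iff₀ (by positivity)]
        nlinarith
    have h2 : ∫ s in a..t, (‖y' s‖ ^ 2 / (2 * c) + c / 2) =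
        (∫ s in a..t, ‖y' s‖ ^ 2) / (2 * c) + (t - a) * (c / 2) := by
      rw [intervalIntegral.integral_add (hIntn2.div_const _) intervalIntegrable_const,
        intervalIntegral.integral_div, intervalIntegral.integral_const, smul_eq_mul]
    have h3 : (∫ s in a..t, ‖y' s‖ ^ 2) / (2 * c) ≤ γ ^ 2 * (t - a) * U ^ 2 / (2 * c) := by
      gcongr
      exact hgain t ⟨hat, htb⟩
    linarith
  by_cases hu0 : U = 0
  · rw [hu0, mul_zero]
    have hta : 0 ≤ t - a := by linarith
    have htτ : t - a ≤ b - a := by linarith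
    refine le_of_forall_pos_le_add ?_
    intro ε hε
    have hc : (0:ℝ) < 2 * ε / (b - a) := by positivity
    have hk := key (2 * ε / (b - a)) hc
    rw [hu0] at hk
    calc ‖∫ s in a..t, y' s‖ ≤ ∫ s in a..t, ‖y' s‖ := hnorm
      _ ≤ γ ^ 2 * (t - a) * 0 ^ 2 / (2 * (2 * ε / (b - a)))
          + (t - a) * (2 * ε / (b - a) / 2) := hk
      _ = (t - a) * (ε / (b - a)) := by
          rw [mul_div_assoc]; ring_nf
      _ ≤ (b - a) * (ε / (b - a)) := mul_le_mul_of_nonneg_right htτ (by positivity)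
      _ = ε := by field_simp
      _ ≤ 0 + ε := by linarith
  · have hupos : 0 < U := lt_of_le_of_ne hU (Ne.symm hu0)
    have hc : (0:ℝ) < γ * U := by positivity
    have hk := key (γ * U) hc
    have heq : γ ^ 2 * (t - a) * U ^ 2 / (2 * (γ * U)) + (t - a) * (γ * U / 2)
        = γ * (t - a) * U := by
      field_simp
      ring
    linarith

set_option maxHeartbeats 400000 in
/-- Passivity degradation under time discretization: the sampled system satisfies
a discrete-time passivity inequality with degraded indices `ν′, ρ′`. -/
theorem stmt_7 {n m : ℕ} (τ γ : ℝ) (hτ : 0 < τ) (hγ : 0 < γ) (ν ρ lam₁ : ℝ)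
    (hlam₁ : 0 < lam₁) (k : ℕ) (V : EuclideanSpace ℝ (Fin n) → ℝ)
    (x : ℝ → EuclideanSpace ℝ (Fin n)) (u y y' : ℝ → EuclideanSpace ℝ (Fin m))
    (hderiv : ∀ t ∈ Set.Icc ((k : ℝ) * τ) (((k : ℝ) + 1) * τ), HasDerivAt y (y' t) t)
    (hy'cont : ContinuousOn y' (Set.Icc ((k : ℝ) * τ) (((k : ℝ) + 1) * τ)))
    (hu : ∀ t ∈ Set.Ico ((k : ℝ) * τ) (((k : ℝ) + 1) * τ), u t = u ((k : ℝ) * τ))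
    (hgain : ∀ t ∈ Set.Icc ((k : ℝ) * τ) (((k : ℝ) + 1) * τ),
      (∫ s in ((k : ℝ) * τ)..t, ‖y' s‖ ^ 2) ≤
        γ ^ 2 * (t - (k : ℝ) * τ) * ‖u ((k : ℝ) * τ)‖ ^ 2)
    (hdiss : V (x (((k : ℝ) + 1) * τ)) - V (x ((k : ℝ) * τ)) ≤
      ∫ t in ((k : ℝ) * τ)..(((k : ℝ) + 1) * τ),
        (⟪u t, y t⟫ - ν * ‖u t‖ ^ 2 - ρ * ‖y t‖ ^ 2)) :
    V (x (((k : ℝ) + 1) * τ)) - V (x ((k : ℝ) * τ)) ≤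
      τ * ⟪u ((k : ℝ) * τ), y ((k : ℝ) * τ)⟫
        - τ * (ν - γ * τ * (1 + lam₁ * |ρ|) - γ ^ 2 * τ ^ 2 * |ρ|) * ‖u ((k : ℝ) * τ)‖ ^ 2
        - τ * (ρ - γ * τ * |ρ| / lam₁) * ‖y ((k : ℝ) * τ)‖ ^ 2 := by
  set a : ℝ := (k : ℝ) * τ with ha
  set b : ℝ := ((k : ℝ) + 1) * τ with hb
  have hba : b - a = τ := by rw [ha, hb]; ring
  have hab : a ≤ b := by nlinarith
  have ycont : ContinuousOn y (Set.Icc a b) := fun t ht =>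
    (hderiv t ht).continuousAt.continuousWithinAt
  have hΔ : ∀ t ∈ Set.Icc a b, ‖y t - y a‖ ≤ γ * (t - a) * ‖u a‖ :=
    stmt7_dev a b γ ‖u a‖ hγ (norm_nonneg _) (by rw [hba]; exact hτ) y y'
      hderiv hy'cont hgain
  set C : ℝ := ⟪u a, y a⟫ - (ν - γ * τ * (1 + lam₁ * |ρ|) - γ ^ 2 * τ ^ 2 * |ρ|) * ‖u a‖ ^ 2
      - (ρ - γ * τ * |ρ| / lam₁) * ‖y a‖ ^ 2 with hC
  have hpt : ∀ t ∈ Set.Icc a b,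
      ⟪u a, y t⟫ - ν * ‖u a‖ ^ 2 - ρ * ‖y t‖ ^ 2 ≤ C := by
    intro t ht
    have hd := hΔ t ht
    have hdτ : ‖y t - y a‖ ≤ γ * τ * ‖u a‖ := by
      refine le_trans hd ?_
      have hta : t - a ≤ τ := by
        have := ht.2; linarith
      exact mul_le_mul_of_nonneg_right
        (mul_le_mul_of_nonneg_left hta hγ.le) (norm_nonneg (u a))
    have hyt : y a + (y t - y a) = y t := by abel
    have hinner : ⟪u a, y a⟫ + ⟪u a, y t - y a⟫ = ⟪u a, y t⟫ := by
      rw [← inner_add_right, hyt]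
    have hexp : ‖y t‖ ^ 2 = ‖y a‖ ^ 2 + 2 * ⟪y a, y t - y a⟫ + ‖y t - y a‖ ^ 2 := by
      have h := norm_add_sq_real (y a) (y t - y a)
      rw [hyt] at h
      exact h
    have hkey := stmt7_real_bound γ τ ρ lam₁ ‖u a‖ ‖y a‖ ‖y t - y a‖
      ⟪u a, y t - y a⟫ ⟪y a, y t - y a⟫ hγ hτ hlam₁ (norm_nonneg _) (norm_nonneg _)
      (norm_nonneg _) hdτ (real_inner_le_norm _ _) (abs_real_inner_le_norm _ _)
    rw [← hinner, hexp, hC]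
    nlinarith [hkey]
  have guIcc : Set.uIcc a b = Set.Icc a b := Set.uIcc_of_le hab
  have gcont : ContinuousOn (fun t => ⟪u a, y t⟫ - ν * ‖u a‖ ^ 2 - ρ * ‖y t‖ ^ 2)
      (Set.Icc a b) := by
    apply ContinuousOn.sub
    apply ContinuousOn.sub
    · exact ContinuousOn.inner continuousOn_const ycont
    · exact continuousOn_const
    · exact continuousOn_const.mul ((ycont.norm).pow 2)
  have gInt : IntervalIntegrable (fun t => ⟪u a, y t⟫ - ν * ‖u a‖ ^ 2 - ρ * ‖y t‖ ^ 2)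
      MeasureTheory.volume a b := by
    apply ContinuousOn.intervalIntegrable
    rwa [guIcc]
  have hbae : ∀ᵐ t : ℝ, t ≠ b := by
    have h0 : MeasureTheory.volume ({b} : Set ℝ) = 0 := MeasureTheory.measure_singleton b
    rw [MeasureTheory.ae_iff]
    simp only [ne_eq, not_not]
    simpa using h0
  have hcongr : (∫ t in a..b, (⟪u t, y t⟫ - ν * ‖u t‖ ^ 2 - ρ * ‖y t‖ ^ 2)) =
      ∫ t in a..b, (⟪u a, y t⟫ - ν * ‖u a‖ ^ 2 - ρ * ‖y t‖ ^ 2) := by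
    apply intervalIntegral.integral_congr_ae
    filter_upwards [hbae] with t htb ht
    rw [Set.uIoc_of_le hab] at ht
    have htI : t ∈ Set.Ico a b := ⟨ht.1.le, lt_of_le_of_ne ht.2 htb⟩
    rw [hu t htI]
  have hmono : (∫ t in a..b, (⟪u a, y t⟫ - ν * ‖u a‖ ^ 2 - ρ * ‖y t‖ ^ 2)) ≤
      ∫ _ in a..b, C := by
    apply intervalIntegral.integral_mono_on hab gInt intervalIntegrable_const
    exact hpt
  have hCint : (∫ _ in a..b, C) = τ * C := by
    rw [intervalIntegral.integral_const, smul_eq_mul, hba]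
  have hfinal : V (x b) - V (x a) ≤ τ * C := by
    rw [hcongr] at hdiss
    linarith
  rw [hC] at hfinal
  linarith [hfinal]
end

section
/- Let τ, γ, μ > 0, m ∈ ℕ with m ≥ 1, λ₂ > 0, a ∈ ℝ, and let û, ŷ ∈ ℝᵐ. Let y : ℝ → ℝᵐ be continuous on [a, a+τ] with ‖y(t) − ŷ‖₂ ≤ τγ‖û‖₂ + (√m)μ/2 for all t ∈ [a, a+τ]. Then ∫_a^{a+τ} ûᵀy(t) dt ≤ τ ûᵀŷ + τ(τγ + λ₂(√m)μ/4)‖û‖₂² + τ(√m)μ/(4λ₂). -/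
open scoped RealInnerProductSpace

/-- Bound on `∫ ûᵀy` in terms of the quantized sampled value `τ ûᵀŷ`. -/
theorem stmt_8 {m : ℕ} (τ γ μ : ℝ) (hτ : 0 < τ) (hγ : 0 < γ) (hμ : 0 < μ)
    (hm : 1 ≤ m) (lam₂ : ℝ) (hlam₂ : 0 < lam₂) (a : ℝ)
    (uhat yhat : EuclideanSpace ℝ (Fin m)) (y : ℝ → EuclideanSpace ℝ (Fin m))
    (hcont : ContinuousOn y (Set.Icc a (a + τ)))
    (hdev : ∀ t ∈ Set.Icc a (a + τ),
      ‖y t - yhat‖ ≤ τ * γ * ‖uhat‖ + Real.sqrt m * μ / 2) :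
    (∫ t in a..(a + τ), ⟪uhat, y t⟫) ≤
      τ * ⟪uhat, yhat⟫ + τ * (τ * γ + lam₂ * Real.sqrt m * μ / 4) * ‖uhat‖ ^ 2
        + τ * Real.sqrt m * μ / (4 * lam₂) := by
  have hab : a ≤ a + τ := by linarith
  set C : ℝ := ⟪uhat, yhat⟫ + ‖uhat‖ * (τ * γ * ‖uhat‖ + Real.sqrt m * μ / 2) with hC
  have hint : IntervalIntegrable (fun t => ⟪uhat, y t⟫) MeasureTheory.volume a (a + τ) := by
    apply ContinuousOn.intervalIntegrable
    rw [Set.uIcc_of_le hab]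
    exact ContinuousOn.inner continuousOn_const hcont
  have h1 : (∫ t in a..(a + τ), ⟪uhat, y t⟫) ≤ ∫ t in a..(a + τ), C := by
    apply intervalIntegral.integral_mono_on hab hint intervalIntegrable_const
    intro t ht
    have hd := hdev t ht
    have h2 : ⟪uhat, y t - yhat⟫ ≤ ‖uhat‖ * ‖y t - yhat‖ := real_inner_le_norm _ _
    have h3 : ⟪uhat, y t⟫ = ⟪uhat, yhat⟫ + ⟪uhat, y t - yhat⟫ := by
      rw [inner_sub_right]; ring
    have h4 : ‖uhat‖ * ‖y t - yhat‖ ≤ ‖uhat‖ * (τ * γ * ‖uhat‖ + Real.sqrt m * μ / 2) :=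
      mul_le_mul_of_nonneg_left hd (norm_nonneg uhat)
    show ⟪uhat, y t⟫ ≤ C
    rw [hC, h3]
    linarith
  have h2 : (∫ t in a..(a + τ), (C : ℝ)) = τ * C := by
    rw [intervalIntegral.integral_const, smul_eq_mul, add_sub_cancel_left]
  rw [h2] at h1
  refine h1.trans ?_
  have hs : 0 ≤ Real.sqrt m := Real.sqrt_nonneg m
  have key : τ * C * (4 * lam₂) ≤ (τ * ⟪uhat, yhat⟫ + τ * (τ * γ + lam₂ * Real.sqrt m * μ / 4) * ‖uhat‖ ^ 2) * (4 * lam₂) + τ * Real.sqrt m * μ := by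
    rw [hC]
    nlinarith [sq_nonneg (lam₂ * ‖uhat‖ - 1), norm_nonneg uhat,
      mul_nonneg (mul_nonneg hτ.le hs) hμ.le,
      mul_nonneg (mul_nonneg (mul_nonneg hτ.le hs) hμ.le) (sq_nonneg (lam₂ * ‖uhat‖ - 1))]
  have h4 : τ * Real.sqrt m * μ / (4 * lam₂) * (4 * lam₂) = τ * Real.sqrt m * μ := by
    field_simp
  have key2 : τ * C * (4 * lam₂) ≤ (τ * ⟪uhat, yhat⟫ + τ * (τ * γ + lam₂ * Real.sqrt m * μ / 4) * ‖uhat‖ ^ 2 + τ * Real.sqrt m * μ / (4 * lam₂)) * (4 * lam₂) := by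
    rw [add_mul, h4]; linarith [key]
  exact le_of_mul_le_mul_right key2 (by positivity)
end

section
/- Let τ, γ, μ > 0, m ∈ ℕ with m ≥ 1, λ₃, λ₄, λ₅ > 0, a ∈ ℝ, and let û, ŷ ∈ ℝᵐ. Let y : ℝ → ℝᵐ be continuous on [a, a+τ] with ‖y(t) − ŷ‖₂ ≤ τγ‖û‖₂ + (√m)μ/2 for all t ∈ [a, a+τ]. Then |∫_a^{a+τ} ‖y(t)‖₂² dt − τ‖ŷ‖₂²| ≤ τ(τ²γ² + τ(√m)μγλ₃ + τγλ₄)‖û‖₂² + τ(τγ/λ₄ + (√m)μλ₅)‖ŷ‖₂² + τ(τ(√m)μγ/(4λ₃) + (√m)μ/(4λ₅) + mμ²/4). -/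
set_option maxHeartbeats 800000

lemma amgm1 (c l x : ℝ) (hc : 0 ≤ c) (hl : 0 < l) (hx : 0 ≤ x) :
    c * x ≤ c * l * x ^ 2 + c / (4 * l) := by
  have key : x ≤ l * x ^ 2 + 1 / (4 * l) := by
    rw [← sub_nonneg]
    have h : l * x ^ 2 + 1 / (4 * l) - x = (2 * l * x - 1) ^ 2 / (4 * l) := by
      field_simp; ring
    rw [h]; positivity
  calc c * x ≤ c * (l * x ^ 2 + 1 / (4 * l)) := mul_le_mul_of_nonneg_left key hc
    _ = c * l * x ^ 2 + c / (4 * l) := by ring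

lemma amgm2 (c l x p : ℝ) (hc : 0 ≤ c) (hl : 0 < l) :
    2 * c * x * p ≤ c * l * x ^ 2 + c / l * p ^ 2 := by
  have key : 2 * (x * p) ≤ l * x ^ 2 + p ^ 2 / l := by
    rw [← sub_nonneg]
    have h : l * x ^ 2 + p ^ 2 / l - 2 * (x * p) = (l * x - p) ^ 2 / l := by
      field_simp; ring
    rw [h]; positivity
  calc 2 * c * x * p = c * (2 * (x * p)) := by ring
    _ ≤ c * (l * x ^ 2 + p ^ 2 / l) := mul_le_mul_of_nonneg_left key hc
    _ = c * l * x ^ 2 + c / l * p ^ 2 := by ring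

/-- Bound on the deviation of `∫ ‖y‖²` from the quantized sampled value `τ ‖ŷ‖²`. -/
theorem stmt_9 {m : ℕ} (τ γ μ : ℝ) (hτ : 0 < τ) (hγ : 0 < γ) (hμ : 0 < μ)
    (hm : 1 ≤ m) (lam₃ lam₄ lam₅ : ℝ) (hlam₃ : 0 < lam₃) (hlam₄ : 0 < lam₄)
    (hlam₅ : 0 < lam₅) (a : ℝ)
    (uhat yhat : EuclideanSpace ℝ (Fin m)) (y : ℝ → EuclideanSpace ℝ (Fin m))
    (hcont : ContinuousOn y (Set.Icc a (a + τ)))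
    (hdev : ∀ t ∈ Set.Icc a (a + τ),
      ‖y t - yhat‖ ≤ τ * γ * ‖uhat‖ + Real.sqrt m * μ / 2) :
    |(∫ t in a..(a + τ), ‖y t‖ ^ 2) - τ * ‖yhat‖ ^ 2| ≤
      τ * (τ ^ 2 * γ ^ 2 + τ * Real.sqrt m * μ * γ * lam₃ + τ * γ * lam₄) * ‖uhat‖ ^ 2
        + τ * (τ * γ / lam₄ + Real.sqrt m * μ * lam₅) * ‖yhat‖ ^ 2
        + τ * (τ * Real.sqrt m * μ * γ / (4 * lam₃) + Real.sqrt m * μ / (4 * lam₅)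
            + m * μ ^ 2 / 4) := by
  have hab : a ≤ a + τ := by linarith
  set s := Real.sqrt m with hs
  have hsm : 0 < s := Real.sqrt_pos.2 (by exact_mod_cast Nat.pos_of_ne_zero (by omega))
  have hsq : s ^ 2 = (m : ℝ) := Real.sq_sqrt (Nat.cast_nonneg m)
  set u := ‖uhat‖ with hu
  set p := ‖yhat‖ with hp
  have hu0 : 0 ≤ u := norm_nonneg _
  have hp0 : 0 ≤ p := norm_nonneg _
  set e := τ * γ * u + s * μ / 2 with he
  have he0 : 0 ≤ e := by positivity
  set C := (τ ^ 2 * γ ^ 2 + τ * s * μ * γ * lam₃ + τ * γ * lam₄) * u ^ 2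
        + (τ * γ / lam₄ + s * μ * lam₅) * p ^ 2
        + (τ * s * μ * γ / (4 * lam₃) + s * μ / (4 * lam₅) + m * μ ^ 2 / 4) with hC
  -- pointwise bound
  have hpt : ∀ t ∈ Set.Icc a (a + τ), |‖y t‖ ^ 2 - p ^ 2| ≤ C := by
    intro t ht
    have hd : ‖y t - yhat‖ ≤ e := hdev t ht
    have h1 : |‖y t‖ - p| ≤ ‖y t - yhat‖ := abs_norm_sub_norm_le _ _
    have h2 := abs_le.1 (h1.trans hd)
    have hn0 : 0 ≤ ‖y t‖ := norm_nonneg _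
    have step1 : |‖y t‖ ^ 2 - p ^ 2| ≤ e ^ 2 + 2 * e * p := by
      rw [abs_le]
      constructor <;> nlinarith [h2.1, h2.2, hn0, hp0, he0]
    have hexp : e ^ 2 + 2 * e * p =
        τ ^ 2 * γ ^ 2 * u ^ 2 + τ * s * μ * γ * u + (m : ℝ) * μ ^ 2 / 4
          + 2 * (τ * γ) * u * p + s * μ * p := by
      rw [he]; linear_combination (μ ^ 2 / 4) * hsq
    have A1 := amgm1 (τ * s * μ * γ) lam₃ u (by positivity) hlam₃ hu0
    have A2 := amgm2 (τ * γ) lam₄ u p (by positivity) hlam₄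
    have A3 := amgm1 (s * μ) lam₅ p (by positivity) hlam₅ hp0
    have step2 : e ^ 2 + 2 * e * p ≤ C := by
      rw [hexp, hC]; linarith [A1, A2, A3]
    exact step1.trans step2
  -- integrability
  have hint1 : IntervalIntegrable (fun t => ‖y t‖ ^ 2) MeasureTheory.volume a (a + τ) :=
    (hcont.norm.pow 2).intervalIntegrable_of_Icc hab
  have hint2 : IntervalIntegrable (fun _ : ℝ => p ^ 2) MeasureTheory.volume a (a + τ) :=
    intervalIntegrable_const
  have hconst : (∫ _ in a..(a + τ), p ^ 2) = τ * p ^ 2 := by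
    simp [mul_comm]
  have hkey : |(∫ t in a..(a + τ), ‖y t‖ ^ 2) - τ * p ^ 2| ≤ C * τ := by
    rw [← hconst, ← intervalIntegral.integral_sub hint1 hint2]
    have := intervalIntegral.norm_integral_le_of_norm_le_const
      (f := fun t => ‖y t‖ ^ 2 - p ^ 2) (C := C) (a := a) (b := a + τ) ?_
    · simpa [abs_of_nonneg hτ.le, Real.norm_eq_abs] using this
    · intro x hx
      have hx' : x ∈ Set.Icc a (a + τ) := by
        rcases Set.uIoc_subset_uIcc hx with h
        rwa [Set.uIcc_of_le hab] at h
      simpa [Real.norm_eq_abs] using hpt x hx'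
  calc |(∫ t in a..(a + τ), ‖y t‖ ^ 2) - τ * p ^ 2| ≤ C * τ := hkey
    _ = τ * (τ ^ 2 * γ ^ 2 + τ * s * μ * γ * lam₃ + τ * γ * lam₄) * u ^ 2
        + τ * (τ * γ / lam₄ + s * μ * lam₅) * p ^ 2
        + τ * (τ * s * μ * γ / (4 * lam₃) + s * μ / (4 * lam₅) + m * μ ^ 2 / 4) := by
      rw [hC]; ring
end

section
/- (Passivity degradation under time discretization and quantization.) Let τ, γ, μ, ε, L, θ > 0, m ∈ ℕ with m ≥ 1, ν, ρ ∈ ℝ, λ₂, λ₃, λ₄, λ₅ > 0, and k ∈ ℕ. Let V : ℝⁿ → ℝ, x : ℝ → ℝⁿ, y : ℝ → ℝᵐ with y continuously differentiable on [kτ, (k+1)τ], let û_k, ŷ_k ∈ ℝᵐ and x̂_k, x̂_{k+1} ∈ ℝⁿ. Assume: (a) the input u is constant on [kτ, (k+1)τ) with value û_k; (b) the gain inequality ∫_{kτ}^{t} ‖ẏ(s)‖₂² ds ≤ γ² (t − kτ) ‖û_k‖₂² holds for all t ∈ [kτ, (k+1)τ]; (c) V(x((k+1)τ)) − V(x(kτ))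 ≤ ∫_{kτ}^{(k+1)τ} ( û_kᵀy(t) − ν‖û_k‖₂² − ρ‖y(t)‖₂² ) dt; (d) ‖ŷ_k − y(kτ)‖₂ ≤ (√m)μ/2; (e) ‖x̂_k − x(kτ)‖_∞ ≤ ε and ‖x̂_{k+1} − x((k+1)τ)‖_∞ ≤ ε; (f) |V(a) − V(b)| ≤ L‖a − b‖_∞^θ whenever ‖a − b‖_∞ ≤ ε. Then V(x̂_{k+1}) − V(x̂_k) ≤ τ û_kᵀ ŷ_k − τ ν″ ‖û_k‖₂² − τ ρ″ ‖ŷ_k‖₂² + α, where ν″ = ν − τγ − λ₂(√m)μ/4 − |ρ|τγ(τγ + (√m)μλ₃ + λ₄), ρ″ = ρ − |ρ|(τγ/λ₄ + (√m)μλ₅), and α = τ(√m)μ/(4λ₂) + τμ|ρ|(τγ√m/(4λ₃) + √m/(4λ₅) + mμ/4) + 2Lε^θ. -/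
/-!
By the gain bound and Cauchy–Schwarz, `‖y t - y (kτ)‖ ≤ γ (t - kτ) ‖û‖`, so the output drifts
from its quantized sample by at most `√m μ / 2 + τ γ ‖û‖` over the whole sampling interval.
Expanding the supply rate `⟪û, y⟫ - ν ‖û‖² - ρ ‖y‖²` around `ŷ` and absorbing the cross terms by
weighted Young inequalities (weights `λ₂, …, λ₅`) bounds the integrand of the dissipation
inequality by the degraded supply rate at `(û, ŷ)` plus a constant. Integrating over the interval
of length `τ`, and replacing `x` by `x̂` at both ends at a cost of `L ε^θ` each, gives the claim.
-/

open MeasureTheory Set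

open scoped RealInnerProductSpace

lemma two_mul_le_mul_sq_add_sq_div {l : ℝ} (hl : 0 < l) (a b : ℝ) :
    2 * a * b ≤ l * a ^ 2 + b ^ 2 / l := by
  have h : l * a ^ 2 + b ^ 2 / l - 2 * a * b = (l * a - b) ^ 2 / l := by
    field_simp
    ring
  have : 0 ≤ (l * a - b) ^ 2 / l := by positivity
  linarith

lemma sq_integral_le_mul_integral_sq {g : ℝ → ℝ} {a b : ℝ} (hab : a ≤ b)
    (hg : IntervalIntegrable g volume a b)
    (hg2 : IntervalIntegrable (fun s => g s ^ 2) volume a b) :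
    (∫ s in a..b, g s) ^ 2 ≤ (b - a) * ∫ s in a..b, g s ^ 2 := by
  -- `c ↦ ∫ (g - c)²` is a nonnegative quadratic, so its discriminant is nonpositive
  have hquad : ∀ c : ℝ,
      0 ≤ (b - a) * (c * c) + (-2 * ∫ s in a..b, g s) * c + ∫ s in a..b, g s ^ 2 := by
    intro c
    have hexpand : ∫ s in a..b, (g s - c) ^ 2 =
        (b - a) * (c * c) + (-2 * ∫ s in a..b, g s) * c + ∫ s in a..b, g s ^ 2 := by
      have hsq : (fun s => (g s - c) ^ 2) = fun s => g s ^ 2 - 2 * c * g s + c ^ 2 := by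
        funext s; ring
      rw [hsq, intervalIntegral.integral_add (hg2.sub (hg.const_mul _)) intervalIntegrable_const,
        intervalIntegral.integral_sub hg2 (hg.const_mul _), intervalIntegral.integral_const_mul,
        intervalIntegral.integral_const, smul_eq_mul]
      ring
    rw [← hexpand]
    exact intervalIntegral.integral_nonneg hab fun _ _ => sq_nonneg _
  have := discrim_le_zero hquad
  rw [discrim] at this
  linarith

lemma abs_sub_le_of_holderOn {E : Type*} [SeminormedAddCommGroup E] {V : E → ℝ} {L θ ε : ℝ}
    (hL : 0 ≤ L) (hθ : 0 ≤ θ)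
    (hV : ∀ a b : E, ‖a - b‖ ≤ ε → |V a - V b| ≤ L * ‖a - b‖ ^ θ) {a b : E}
    (hab : ‖a - b‖ ≤ ε) : |V a - V b| ≤ L * ε ^ θ :=
  (hV a b hab).trans (by gcongr)

section VectorValued

variable {E : Type*} [NormedAddCommGroup E] [NormedSpace ℝ E] [CompleteSpace E]

lemma norm_sub_sq_le_mul_integral_norm_deriv_sq {f f' : ℝ → E} {a b : ℝ} (hab : a ≤ b)
    (hderiv : ∀ t ∈ Icc a b, HasDerivAt f (f' t) t) (hf' : ContinuousOn f' (Icc a b)) :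
    ‖f b - f a‖ ^ 2 ≤ (b - a) * ∫ s in a..b, ‖f' s‖ ^ 2 := by
  have hftc : ∫ s in a..b, f' s = f b - f a :=
    intervalIntegral.integral_eq_sub_of_hasDerivAt (by rwa [uIcc_of_le hab])
      (hf'.intervalIntegrable_of_Icc hab)
  rw [← hftc]
  calc ‖∫ s in a..b, f' s‖ ^ 2 ≤ (∫ s in a..b, ‖f' s‖) ^ 2 := by
        gcongr
        exact intervalIntegral.norm_integral_le_integral_norm hab
    _ ≤ (b - a) * ∫ s in a..b, ‖f' s‖ ^ 2 :=
        sq_integral_le_mul_integral_sq hab (hf'.norm.intervalIntegrable_of_Icc hab)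
          ((hf'.norm.pow 2).intervalIntegrable_of_Icc hab)

lemma norm_sub_le_of_integral_norm_deriv_sq_le {f f' : ℝ → E} {a b K : ℝ} (hab : a ≤ b)
    (hderiv : ∀ t ∈ Icc a b, HasDerivAt f (f' t) t) (hf' : ContinuousOn f' (Icc a b))
    (hK : 0 ≤ K) (henergy : ∫ s in a..b, ‖f' s‖ ^ 2 ≤ K ^ 2 * (b - a)) :
    ‖f b - f a‖ ≤ K * (b - a) := by
  refine le_of_sq_le_sq ?_ (mul_nonneg hK (sub_nonneg.2 hab))
  calc ‖f b - f a‖ ^ 2 ≤ (b - a) * ∫ s in a..b, ‖f' s‖ ^ 2 :=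
        norm_sub_sq_le_mul_integral_norm_deriv_sq hab hderiv hf'
    _ ≤ (b - a) * (K ^ 2 * (b - a)) := by gcongr
    _ = (K * (b - a)) ^ 2 := by ring

end VectorValued

section SupplyRate

variable {F : Type*} [NormedAddCommGroup F] [InnerProductSpace ℝ F]

def supplyRate (ν ρ : ℝ) (u y : F) : ℝ := ⟪u, y⟫ - ν * ‖u‖ ^ 2 - ρ * ‖y‖ ^ 2

lemma supplyRate_sub_supplyRate_le (ν ρ : ℝ) (u y ŷ : F) :
    supplyRate ν ρ u y - supplyRate ν ρ u ŷ ≤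
      ‖u‖ * ‖y - ŷ‖ + |ρ| * (2 * ‖ŷ‖ * ‖y - ŷ‖ + ‖y - ŷ‖ ^ 2) := by
  have hsplit : y = ŷ + (y - ŷ) := by abel
  have hinner : ⟪u, y⟫ ≤ ⟪u, ŷ⟫ + ‖u‖ * ‖y - ŷ‖ := by
    rw [hsplit, inner_add_right, add_sub_cancel_left]
    grw [real_inner_le_norm u (y - ŷ)]
  have hnorm : ‖y‖ ^ 2 = ‖ŷ‖ ^ 2 + 2 * ⟪ŷ, y - ŷ⟫ + ‖y - ŷ‖ ^ 2 := by
    conv_lhs => rw [hsplit]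
    exact norm_add_sq_real _ _
  have hcross : |ρ * ⟪ŷ, y - ŷ⟫| ≤ |ρ| * (‖ŷ‖ * ‖y - ŷ‖) := by
    rw [abs_mul]
    exact mul_le_mul_of_nonneg_left (abs_real_inner_le_norm _ _) (abs_nonneg ρ)
  have hsq : -(ρ * ‖y - ŷ‖ ^ 2) ≤ |ρ| * ‖y - ŷ‖ ^ 2 := by
    nlinarith [neg_abs_le ρ, sq_nonneg ‖y - ŷ‖]
  simp only [supplyRate, hnorm]
  linarith [neg_abs_le (ρ * ⟪ŷ, y - ŷ⟫)]

lemma supplyRate_le_of_norm_sub_le {ν ρ M G l₂ l₃ l₄ l₅ : ℝ} {u y ŷ : F}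
    (hM : 0 ≤ M) (hG : 0 ≤ G) (hl₂ : 0 < l₂) (hl₃ : 0 < l₃) (hl₄ : 0 < l₄) (hl₅ : 0 < l₅)
    (hy : ‖y - ŷ‖ ≤ M / 2 + G * ‖u‖) :
    supplyRate ν ρ u y ≤
      supplyRate (ν - G - l₂ * M / 4 - |ρ| * G * (G + M * l₃ + l₄))
          (ρ - |ρ| * (G / l₄ + M * l₅)) u ŷ
        + (M / (4 * l₂) + |ρ| * (M * G / (4 * l₃) + M / (4 * l₅) + M ^ 2 / 4)) := by
  set U := ‖u‖
  set Y := ‖ŷ‖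
  set W := ‖y - ŷ‖
  have hρ : 0 ≤ |ρ| := abs_nonneg ρ
  have hmono : U * W + |ρ| * (2 * Y * W + W ^ 2) ≤
      U * (M / 2 + G * U) + |ρ| * (2 * Y * (M / 2 + G * U) + (M / 2 + G * U) ^ 2) := by
    gcongr
  -- one weighted Young inequality for each cross term of the right-hand side
  have y₂ := mul_le_mul_of_nonneg_left (two_mul_le_mul_sq_add_sq_div hl₂ U 1)
    (div_nonneg hM zero_le_four)
  have y₃ := mul_le_mul_of_nonneg_left (two_mul_le_mul_sq_add_sq_div hl₃ U (1 / 2))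
    (mul_nonneg hρ (mul_nonneg hM hG))
  have y₄ := mul_le_mul_of_nonneg_left (two_mul_le_mul_sq_add_sq_div hl₄ U Y)
    (mul_nonneg hρ hG)
  have y₅ := mul_le_mul_of_nonneg_left (two_mul_le_mul_sq_add_sq_div hl₅ Y (1 / 2))
    (mul_nonneg hρ hM)
  have hdiff := supplyRate_sub_supplyRate_le ν ρ u y ŷ
  simp only [supplyRate] at hdiff ⊢
  linear_combination hdiff + hmono + y₂ + y₃ + y₄ + y₅

lemma integral_supplyRate_le_of_norm_sub_le {ν ρ M G l₂ l₃ l₄ l₅ a b : ℝ} {u ŷ : F}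
    {f : ℝ → F} (hab : a ≤ b) (hf : ContinuousOn f (Icc a b))
    (hM : 0 ≤ M) (hG : 0 ≤ G) (hl₂ : 0 < l₂) (hl₃ : 0 < l₃) (hl₄ : 0 < l₄) (hl₅ : 0 < l₅)
    (hdrift : ∀ t ∈ Icc a b, ‖f t - ŷ‖ ≤ M / 2 + G * ‖u‖) :
    ∫ t in a..b, supplyRate ν ρ u (f t) ≤
      (b - a) * (supplyRate (ν - G - l₂ * M / 4 - |ρ| * G * (G + M * l₃ + l₄))
          (ρ - |ρ| * (G / l₄ + M * l₅)) u ŷ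
        + (M / (4 * l₂) + |ρ| * (M * G / (4 * l₃) + M / (4 * l₅) + M ^ 2 / 4))) := by
  have hint : IntervalIntegrable (fun t => supplyRate ν ρ u (f t)) volume a b :=
    (((continuousOn_const.inner hf).sub continuousOn_const).sub
      (continuousOn_const.mul (hf.norm.pow 2))).intervalIntegrable_of_Icc hab
  refine (intervalIntegral.integral_mono_on hab hint intervalIntegrable_const fun t ht =>
    supplyRate_le_of_norm_sub_le hM hG hl₂ hl₃ hl₄ hl₅ (hdrift t ht)).trans_eq ?_
  rw [intervalIntegral.integral_const, smul_eq_mul]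

end SupplyRate

theorem stmt_10_general {n m : ℕ} (τ γ μ ε L θ : ℝ) (hτ : 0 < τ) (hγ : 0 < γ) (hμ : 0 < μ)
    (hL : 0 < L) (hθ : 0 < θ) (ν ρ : ℝ)
    (lam₂ lam₃ lam₄ lam₅ : ℝ) (hlam₂ : 0 < lam₂) (hlam₃ : 0 < lam₃)
    (hlam₄ : 0 < lam₄) (hlam₅ : 0 < lam₅) (k : ℕ)
    (V : (Fin n → ℝ) → ℝ) (x : ℝ → (Fin n → ℝ))
    (y y' : ℝ → EuclideanSpace ℝ (Fin m))
    (uhat yhat : EuclideanSpace ℝ (Fin m)) (xhat xhat' : Fin n → ℝ)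
    (hderiv : ∀ t ∈ Set.Icc ((k : ℝ) * τ) (((k : ℝ) + 1) * τ), HasDerivAt y (y' t) t)
    (hy'cont : ContinuousOn y' (Set.Icc ((k : ℝ) * τ) (((k : ℝ) + 1) * τ)))
    -- (b) gain inequality
    (hgain : ∀ t ∈ Set.Icc ((k : ℝ) * τ) (((k : ℝ) + 1) * τ),
      (∫ s in ((k : ℝ) * τ)..t, ‖y' s‖ ^ 2) ≤ γ ^ 2 * (t - (k : ℝ) * τ) * ‖uhat‖ ^ 2)
    -- (c) continuous-time dissipation inequality
    (hdiss : V (x (((k : ℝ) + 1) * τ)) - V (x ((k : ℝ) * τ)) ≤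
      ∫ t in ((k : ℝ) * τ)..(((k : ℝ) + 1) * τ),
        (⟪uhat, y t⟫ - ν * ‖uhat‖ ^ 2 - ρ * ‖y t‖ ^ 2))
    -- (d) output quantization error
    (hy : ‖yhat - y ((k : ℝ) * τ)‖ ≤ Real.sqrt m * μ / 2)
    -- (e) state abstraction error (ℓ∞ norm)
    (hx : ‖xhat - x ((k : ℝ) * τ)‖ ≤ ε) (hx' : ‖xhat' - x (((k : ℝ) + 1) * τ)‖ ≤ ε)
    -- (f) Hölder continuity of V at scale ε (ℓ∞ norm)
    (hV : ∀ a b : Fin n → ℝ, ‖a - b‖ ≤ ε → |V a - V b| ≤ L * ‖a - b‖ ^ θ) :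
    V xhat' - V xhat ≤
      τ * ⟪uhat, yhat⟫
        - τ * (ν - τ * γ - lam₂ * Real.sqrt m * μ / 4
            - |ρ| * τ * γ * (τ * γ + Real.sqrt m * μ * lam₃ + lam₄)) * ‖uhat‖ ^ 2
        - τ * (ρ - |ρ| * (τ * γ / lam₄ + Real.sqrt m * μ * lam₅)) * ‖yhat‖ ^ 2
        + (τ * Real.sqrt m * μ / (4 * lam₂)
            + τ * μ * |ρ| * (τ * γ * Real.sqrt m / (4 * lam₃)
                + Real.sqrt m / (4 * lam₅) + m * μ / 4)
            + 2 * L * ε ^ θ) := by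
  set a := (k : ℝ) * τ
  set b := ((k : ℝ) + 1) * τ
  have hba : b - a = τ := by ring
  have hab : a ≤ b := by linarith
  have hM : 0 ≤ Real.sqrt m * μ := by positivity
  have hdrift : ∀ t ∈ Icc a b, ‖y t - yhat‖ ≤ Real.sqrt m * μ / 2 + τ * γ * ‖uhat‖ := by
    intro t ⟨hat, htb⟩
    have hsub : Icc a t ⊆ Icc a b := Icc_subset_Icc_right htb
    have hinc : ‖y t - y a‖ ≤ γ * ‖uhat‖ * (t - a) :=
      norm_sub_le_of_integral_norm_deriv_sq_le hat (fun s hs => hderiv s (hsub hs))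
        (hy'cont.mono hsub) (by positivity) ((hgain t ⟨hat, htb⟩).trans_eq (by ring))
    have hτt : γ * ‖uhat‖ * (t - a) ≤ γ * ‖uhat‖ * τ := by gcongr; linarith
    calc ‖y t - yhat‖ ≤ ‖y t - y a‖ + ‖y a - yhat‖ := norm_sub_le_norm_sub_add_norm_sub _ _ _
      _ ≤ γ * ‖uhat‖ * (t - a) + Real.sqrt m * μ / 2 :=
        add_le_add hinc ((norm_sub_rev _ _).trans_le hy)
      _ ≤ Real.sqrt m * μ / 2 + τ * γ * ‖uhat‖ := by linarith
  have hycont : ContinuousOn y (Icc a b) := fun t ht =>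
    (hderiv t ht).continuousAt.continuousWithinAt
  have hrate := integral_supplyRate_le_of_norm_sub_le (ν := ν) (ρ := ρ) hab hycont hM
    (by positivity) hlam₂ hlam₃ hlam₄ hlam₅ hdrift
  have hV₁ := abs_sub_le_of_holderOn hL.le hθ.le hV hx'
  have hV₀ := abs_sub_le_of_holderOn hL.le hθ.le hV hx
  have hsqrt : Real.sqrt m ^ 2 = m := Real.sq_sqrt (Nat.cast_nonneg m)
  rw [hba] at hrate
  simp only [supplyRate] at hrate
  linear_combination hdiss + hrate + (abs_le.mp hV₁).2 + (abs_le.mp hV₀).1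
    + (τ * μ ^ 2 * |ρ| / 4) * hsqrt

/-- Passivity degradation under time discretization and quantization: the symbolic
(approximately bisimilar) trajectory satisfies a discrete-time quasi-passivity
inequality with degraded indices `ν″, ρ″` and bias `α`. The state space carries
the sup (ℓ∞) norm, the input/output space the Euclidean (ℓ₂) norm. -/
theorem stmt_10 {n m : ℕ} (τ γ μ ε L θ : ℝ) (hτ : 0 < τ) (hγ : 0 < γ) (hμ : 0 < μ)
    (hε : 0 < ε) (hL : 0 < L) (hθ : 0 < θ) (hm : 1 ≤ m) (ν ρ : ℝ)
    (lam₂ lam₃ lam₄ lam₅ : ℝ) (hlam₂ : 0 < lam₂) (hlam₃ : 0 < lam₃)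
    (hlam₄ : 0 < lam₄) (hlam₅ : 0 < lam₅) (k : ℕ)
    (V : (Fin n → ℝ) → ℝ) (x : ℝ → (Fin n → ℝ))
    (u y y' : ℝ → EuclideanSpace ℝ (Fin m))
    (uhat yhat : EuclideanSpace ℝ (Fin m)) (xhat xhat' : Fin n → ℝ)
    (hderiv : ∀ t ∈ Set.Icc ((k : ℝ) * τ) (((k : ℝ) + 1) * τ), HasDerivAt y (y' t) t)
    (hy'cont : ContinuousOn y' (Set.Icc ((k : ℝ) * τ) (((k : ℝ) + 1) * τ)))
    -- (a) the input is constant on the sampling interval with value `uhat`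
    (hu : ∀ t ∈ Set.Ico ((k : ℝ) * τ) (((k : ℝ) + 1) * τ), u t = uhat)
    -- (b) gain inequality
    (hgain : ∀ t ∈ Set.Icc ((k : ℝ) * τ) (((k : ℝ) + 1) * τ),
      (∫ s in ((k : ℝ) * τ)..t, ‖y' s‖ ^ 2) ≤ γ ^ 2 * (t - (k : ℝ) * τ) * ‖uhat‖ ^ 2)
    -- (c) continuous-time dissipation inequality
    (hdiss : V (x (((k : ℝ) + 1) * τ)) - V (x ((k : ℝ) * τ)) ≤
      ∫ t in ((k : ℝ) * τ)..(((k : ℝ) + 1) * τ),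
        (⟪uhat, y t⟫ - ν * ‖uhat‖ ^ 2 - ρ * ‖y t‖ ^ 2))
    -- (d) output quantization error
    (hy : ‖yhat - y ((k : ℝ) * τ)‖ ≤ Real.sqrt m * μ / 2)
    -- (e) state abstraction error (ℓ∞ norm)
    (hx : ‖xhat - x ((k : ℝ) * τ)‖ ≤ ε) (hx' : ‖xhat' - x (((k : ℝ) + 1) * τ)‖ ≤ ε)
    -- (f) Hölder continuity of V at scale ε (ℓ∞ norm)
    (hV : ∀ a b : Fin n → ℝ, ‖a - b‖ ≤ ε → |V a - V b| ≤ L * ‖a - b‖ ^ θ) :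
    V xhat' - V xhat ≤
      τ * ⟪uhat, yhat⟫
        - τ * (ν - τ * γ - lam₂ * Real.sqrt m * μ / 4
            - |ρ| * τ * γ * (τ * γ + Real.sqrt m * μ * lam₃ + lam₄)) * ‖uhat‖ ^ 2
        - τ * (ρ - |ρ| * (τ * γ / lam₄ + Real.sqrt m * μ * lam₅)) * ‖yhat‖ ^ 2
        + (τ * Real.sqrt m * μ / (4 * lam₂)
            + τ * μ * |ρ| * (τ * γ * Real.sqrt m / (4 * lam₃)
                + Real.sqrt m / (4 * lam₅) + m * μ / 4)
            + 2 * L * ε ^ θ) :=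
  stmt_10_general τ γ μ ε L θ hτ hγ hμ hL hθ ν ρ lam₂ lam₃ lam₄ lam₅ hlam₂ hlam₃ hlam₄ hlam₅ k V x y
    y' uhat yhat xhat xhat' hderiv hy'cont hgain hdiss hy hx hx' hV
end

section
/- Let ν, ρ, γ > 0 and τ > 0. There exists λ₁ > 0 such that both ν − γτ(1 + λ₁ρ) − γ²τ²ρ > 0 and ρ − γτρ/λ₁ > 0 if and only if τ < 2ν / (γ(√(8νρ + 1) + 1)). -/
/-! Put `x = γτ`. The second index is positive exactly when `λ₁ > x`, and the first one is
strictly decreasing in `λ₁`, so a suitable `λ₁` exists iff the first index is positive in the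
limit `λ₁ → x`, i.e. iff `2ρx² + x < ν`. The positive root of `2ρx² + x - ν` is
`(√(8νρ+1) - 1)/(4ρ) = 2ν/(√(8νρ+1) + 1)`. -/

lemma exists_degraded_indices_pos_iff {ν ρ x : ℝ} (hρ : 0 < ρ) (hx : 0 < x) :
    (∃ l > 0, 0 < ν - x * (1 + l * ρ) - x ^ 2 * ρ ∧ 0 < ρ - x * ρ / l) ↔
      2 * ρ * x ^ 2 + x < ν := by
  have hxρ : 0 < x * ρ := mul_pos hx hρ
  have second_pos_iff {l : ℝ} (hl : 0 < l) : 0 < ρ - x * ρ / l ↔ x < l := by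
    rw [sub_pos, div_lt_iff₀ hl, mul_comm ρ l, mul_lt_mul_iff_left₀ hρ]
  constructor
  · rintro ⟨l, hl, h_first, h_second⟩
    have hxl : x < l := (second_pos_iff hl).1 h_second
    nlinarith [mul_lt_mul_of_pos_left hxl hxρ]
  · intro h
    -- halfway between the two conditions: this `l` makes the first index `(ν - x)/2 - ρx²`
    set l := (ν - x) / (2 * x * ρ) with hl_def
    have hxl : x < l := by
      rw [hl_def, lt_div_iff₀ (by positivity)]
      nlinarith
    have hl : 0 < l := hx.trans hxl
    have hxlρ : x * (l * ρ) = (ν - x) / 2 := by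
      rw [hl_def]
      field_simp
    refine ⟨l, hl, ?_, (second_pos_iff hl).2 hxl⟩
    nlinarith

lemma lt_two_mul_div_sqrt_add_one_iff {ν ρ x : ℝ} (hν : 0 ≤ ν) (hρ : 0 < ρ) (hx : 0 ≤ x) :
    x < 2 * ν / (√(8 * ν * ρ + 1) + 1) ↔ 2 * ρ * x ^ 2 + x < ν := by
  set s := √(8 * ν * ρ + 1)
  have hs_sq : s ^ 2 = 8 * ν * ρ + 1 := Real.sq_sqrt (by positivity)
  have hs : 0 ≤ s := Real.sqrt_nonneg _
  have hfactor : 8 * ρ * (2 * ρ * x ^ 2 + x - ν) = (4 * ρ * x + 1 + s) * (4 * ρ * x + 1 - s) := by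
    linear_combination hs_sq
  have hroot : 4 * ρ * (2 * ν) = (s - 1) * (s + 1) := by
    linear_combination (-1 : ℝ) * hs_sq
  have hplus : 0 < 4 * ρ * x + 1 + s := by positivity
  have below_root_iff : 4 * ρ * x < s - 1 ↔ 2 * ρ * x ^ 2 + x < ν := by
    constructor <;> intro h <;> nlinarith
  rw [← below_root_iff, lt_div_iff₀ (by positivity)]
  constructor <;> intro h <;> nlinarith

/-- Existence of a parameter `λ₁ > 0` making both degraded passivity indices
positive is equivalent to the sampling-period bound `τ < 2ν/(γ(√(8νρ+1)+1))`. -/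
theorem stmt_13 (ν ρ γ τ : ℝ) (hν : 0 < ν) (hρ : 0 < ρ) (hγ : 0 < γ) (hτ : 0 < τ) :
    (∃ lam₁ > 0, 0 < ν - γ * τ * (1 + lam₁ * ρ) - γ ^ 2 * τ ^ 2 * ρ ∧
        0 < ρ - γ * τ * ρ / lam₁) ↔
      τ < 2 * ν / (γ * (Real.sqrt (8 * ν * ρ + 1) + 1)) := by
  have hx : 0 < γ * τ := mul_pos hγ hτ
  rw [← mul_pow, exists_degraded_indices_pos_iff hρ hx,
    ← lt_two_mul_div_sqrt_add_one_iff hν.le hρ hx.le, div_mul_eq_div_div_swap, lt_div_iff₀' hγ]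
end

section
/- (Lower feedback block with quantized input.) Let τ, μ > 0, m ∈ ℕ with m ≥ 1, ℓ₁, ℓ₂ > 0, ν̂₂ ≥ 0, ρ̂₂ ∈ ℝ, α̂ ∈ ℝ, k ∈ ℕ. Let V₂ : ℝⁿ → ℝ, x̂₂[k], x̂₂[k+1] ∈ ℝⁿ, and u₂, û₂, ŷ₂ ∈ ℝᵐ. Assume: (a) (1/τ)(V₂(x̂₂[k+1]) − V₂(x̂₂[k])) ≤ û₂ᵀŷ₂ − ν̂₂‖û₂‖₂² − ρ̂₂‖ŷ₂‖₂² + α̂/τ; (b) ‖û₂ − u₂‖₂ ≤ (√m)μ/2. Then (1/τ)(V₂(x̂₂[k+1]) − V₂(x̂₂[k])) ≤ u₂ᵀŷ₂ − ν̄₂‖u₂‖₂² − ρ̄₂‖ŷ₂‖₂² + ᾱ₂/τ, where ν̄₂ = ν̂₂(1 − 1/ℓ₂), ρ̄₂ = ρ̂₂ − 1/(4ℓ₁), and ᾱ₂ = α̂ + τ(mμ²/4)(ℓ₁ + ν̂₂(ℓ₂ + 1)). -/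
open scoped RealInnerProductSpace

section InnerProductSpace

variable {E : Type*} [NormedAddCommGroup E] [InnerProductSpace ℝ E]

theorem real_inner_le_mul_norm_sq_add_norm_sq_div {ℓ : ℝ} (hℓ : 0 < ℓ) (x y : E) :
    ⟪x, y⟫ ≤ ℓ * ‖x‖ ^ 2 + 1 / (4 * ℓ) * ‖y‖ ^ 2 := by
  have young : ‖x‖ * ‖y‖ ≤ ℓ * ‖x‖ ^ 2 + 1 / (4 * ℓ) * ‖y‖ ^ 2 := by
    rw [one_div, inv_mul_eq_div, ← sub_le_iff_le_add', le_div_iff₀ (by positivity)]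
    nlinarith [sq_nonneg (2 * ℓ * ‖x‖ - ‖y‖)]
  exact (real_inner_le_norm x y).trans young

theorem one_sub_inv_mul_norm_sub_sq_le {ℓ : ℝ} (hℓ : 0 < ℓ) (x y : E) :
    (1 - 1 / ℓ) * ‖x - y‖ ^ 2 ≤ ‖x‖ ^ 2 + (ℓ + 1) * ‖y‖ ^ 2 := by
  -- `ℓ ‖x‖² + ℓ (ℓ - 1) ‖y‖² - (ℓ - 1) ‖x - y‖² = ‖x + (ℓ - 1) y‖²`
  have key : (ℓ - 1) * ‖x - y‖ ^ 2 ≤ ℓ * (‖x‖ ^ 2 + (ℓ - 1) * ‖y‖ ^ 2) := by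
    rw [← real_inner_self_eq_norm_sq, ← real_inner_self_eq_norm_sq,
      ← real_inner_self_eq_norm_sq]
    have := real_inner_self_nonneg (x := x + (ℓ - 1) • y)
    simp only [inner_add_left, inner_add_right, inner_sub_left, inner_sub_right,
      real_inner_smul_left, real_inner_smul_right, real_inner_comm x y] at this ⊢
    nlinarith
  have hsub : (1 - 1 / ℓ) * ‖x - y‖ ^ 2 ≤ ‖x‖ ^ 2 + (ℓ - 1) * ‖y‖ ^ 2 := by
    rw [one_sub_div hℓ.ne', div_mul_eq_mul_div, div_le_iff₀ hℓ, mul_comm _ ℓ]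
    exact key
  nlinarith [sq_nonneg ‖y‖]

theorem supply_rate_le_of_norm_sub_sq_le {ℓ₁ ℓ₂ ν ρ c δ D : ℝ} (hℓ₁ : 0 < ℓ₁) (hℓ₂ : 0 < ℓ₂)
    (hν : 0 ≤ ν) {x x' y : E} (hD : D ≤ ⟪x', y⟫ - ν * ‖x'‖ ^ 2 - ρ * ‖y‖ ^ 2 + c)
    (hδ : ‖x' - x‖ ^ 2 ≤ δ) :
    D ≤ ⟪x, y⟫ - ν * (1 - 1 / ℓ₂) * ‖x‖ ^ 2 - (ρ - 1 / (4 * ℓ₁)) * ‖y‖ ^ 2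
      + (c + δ * (ℓ₁ + ν * (ℓ₂ + 1))) := by
  have hinner : ⟪x', y⟫ ≤ ⟪x, y⟫ + ℓ₁ * ‖x' - x‖ ^ 2 + 1 / (4 * ℓ₁) * ‖y‖ ^ 2 := by
    have := real_inner_le_mul_norm_sq_add_norm_sq_div hℓ₁ (x' - x) y
    rw [inner_sub_left] at this
    linarith
  have hnorm : (1 - 1 / ℓ₂) * ‖x‖ ^ 2 ≤ ‖x'‖ ^ 2 + (ℓ₂ + 1) * ‖x' - x‖ ^ 2 := by
    simpa using one_sub_inv_mul_norm_sub_sq_le hℓ₂ x' (x' - x)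
  have hδ₁ := mul_le_mul_of_nonneg_left hδ hℓ₁.le
  have hδ₂ := mul_le_mul_of_nonneg_left hδ (by positivity : 0 ≤ ν * (ℓ₂ + 1))
  nlinarith [mul_le_mul_of_nonneg_left hnorm hν]

end InnerProductSpace

theorem stmt_14_general {n m : ℕ} (τ μ : ℝ) (hτ : 0 < τ)
    (ℓ₁ ℓ₂ : ℝ) (hℓ₁ : 0 < ℓ₁) (hℓ₂ : 0 < ℓ₂)
    (νhat₂ : ℝ) (hνhat₂ : 0 ≤ νhat₂) (ρhat₂ αhat : ℝ)
    (V₂ : EuclideanSpace ℝ (Fin n) → ℝ) (xhat₂ xhat₂' : EuclideanSpace ℝ (Fin n))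
    (u₂ uhat₂ yhat₂ : EuclideanSpace ℝ (Fin m))
    (hdiss : (1 / τ) * (V₂ xhat₂' - V₂ xhat₂) ≤
      ⟪uhat₂, yhat₂⟫ - νhat₂ * ‖uhat₂‖ ^ 2 - ρhat₂ * ‖yhat₂‖ ^ 2 + αhat / τ)
    (hq : ‖uhat₂ - u₂‖ ≤ Real.sqrt m * μ / 2) :
    (1 / τ) * (V₂ xhat₂' - V₂ xhat₂) ≤
      ⟪u₂, yhat₂⟫ - (νhat₂ * (1 - 1 / ℓ₂)) * ‖u₂‖ ^ 2
        - (ρhat₂ - 1 / (4 * ℓ₁)) * ‖yhat₂‖ ^ 2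
        + (αhat + τ * (m * μ ^ 2 / 4) * (ℓ₁ + νhat₂ * (ℓ₂ + 1))) / τ := by
  have hq_sq : ‖uhat₂ - u₂‖ ^ 2 ≤ m * μ ^ 2 / 4 := by
    calc ‖uhat₂ - u₂‖ ^ 2 ≤ (Real.sqrt m * μ / 2) ^ 2 := pow_le_pow_left₀ (norm_nonneg _) hq 2
      _ = m * μ ^ 2 / 4 := by rw [div_pow, mul_pow, Real.sq_sqrt (Nat.cast_nonneg m)]; ring
  have hα : (αhat + τ * (m * μ ^ 2 / 4) * (ℓ₁ + νhat₂ * (ℓ₂ + 1))) / τ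
      = αhat / τ + m * μ ^ 2 / 4 * (ℓ₁ + νhat₂ * (ℓ₂ + 1)) := by
    field_simp
  rw [hα]
  exact supply_rate_le_of_norm_sub_sq_le hℓ₁ hℓ₂ hνhat₂ hdiss hq_sq

/-- Lower feedback block with quantized input: the quasi-passivity inequality in
terms of the quantized input `û₂` yields one in terms of the true input `u₂`,
with further degraded indices. -/
theorem stmt_14 {n m : ℕ} (τ μ : ℝ) (hτ : 0 < τ) (hμ : 0 < μ) (hm : 1 ≤ m)
    (ℓ₁ ℓ₂ : ℝ) (hℓ₁ : 0 < ℓ₁) (hℓ₂ : 0 < ℓ₂)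
    (νhat₂ : ℝ) (hνhat₂ : 0 ≤ νhat₂) (ρhat₂ αhat : ℝ) (k : ℕ)
    (V₂ : EuclideanSpace ℝ (Fin n) → ℝ) (xhat₂ xhat₂' : EuclideanSpace ℝ (Fin n))
    (u₂ uhat₂ yhat₂ : EuclideanSpace ℝ (Fin m))
    (hdiss : (1 / τ) * (V₂ xhat₂' - V₂ xhat₂) ≤
      ⟪uhat₂, yhat₂⟫ - νhat₂ * ‖uhat₂‖ ^ 2 - ρhat₂ * ‖yhat₂‖ ^ 2 + αhat / τ)
    (hq : ‖uhat₂ - u₂‖ ≤ Real.sqrt m * μ / 2) :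
    (1 / τ) * (V₂ xhat₂' - V₂ xhat₂) ≤
      ⟪u₂, yhat₂⟫ - (νhat₂ * (1 - 1 / ℓ₂)) * ‖u₂‖ ^ 2
        - (ρhat₂ - 1 / (4 * ℓ₁)) * ‖yhat₂‖ ^ 2
        + (αhat + τ * (m * μ ^ 2 / 4) * (ℓ₁ + νhat₂ * (ℓ₂ + 1))) / τ :=
  stmt_14_general τ μ hτ ℓ₁ ℓ₂ hℓ₁ hℓ₂ νhat₂ hνhat₂ ρhat₂ αhat V₂ xhat₂ xhat₂' u₂ uhat₂ yhat₂ hdiss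
    hq
end

section
/- Let ν̄₁, ν̄₂, ρ̄₁, ρ̄₂, ν_c, ρ_c ∈ ℝ with ν_c < ν̄₁, ν_c < ν̄₂, ρ_c ≤ ρ̄₂ − ν_c ν̄₁/(ν̄₁ − ν_c), and ρ_c ≤ ρ̄₁ − ν_c ν̄₂/(ν̄₂ − ν_c). Then for all w₁, w₂, y₁, ŷ₂ ∈ ℝᵐ: ν̄₁‖w₁‖₂² − 2ν̄₁ w₁ᵀŷ₂ + (ρ̄₂ + ν̄₁)‖ŷ₂‖₂² + ν̄₂‖w₂‖₂² + 2ν̄₂ w₂ᵀy₁ + (ρ̄₁ + ν̄₂)‖y₁‖₂² ≥ ν_c(‖w₁‖₂² + ‖w₂‖₂²) + ρ_c(‖y₁‖₂² + ‖ŷ₂‖₂²). -/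
open scoped RealInnerProductSpace

lemma aux_16 {m : ℕ} (ν ρbar νc ρc : ℝ) (h : νc < ν)
    (h₃ : ρc ≤ ρbar - νc * ν / (ν - νc)) (w y : EuclideanSpace ℝ (Fin m)) :
    νc * ‖w‖ ^ 2 + ρc * ‖y‖ ^ 2 ≤
      ν * ‖w‖ ^ 2 - 2 * ν * ⟪w, y⟫ + (ρbar + ν) * ‖y‖ ^ 2 := by
  have ha : (0:ℝ) < ν - νc := by linarith
  have hc : ν ^ 2 ≤ (ρbar + ν - ρc) * (ν - νc) := by
    have h₃' : νc * ν / (ν - νc) ≤ ρbar - ρc := by linarith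
    rw [div_le_iff₀ ha] at h₃'
    nlinarith
  have habs : |⟪w, y⟫| ≤ ‖w‖ * ‖y‖ := abs_real_inner_le_norm w y
  have ht1 : ⟪w, y⟫ ≤ ‖w‖ * ‖y‖ := (abs_le.mp habs).2
  have ht2 : -(‖w‖ * ‖y‖) ≤ ⟪w, y⟫ := (abs_le.mp habs).1
  have hx : (0:ℝ) ≤ ‖w‖ := norm_nonneg w
  have hy : (0:ℝ) ≤ ‖y‖ := norm_nonneg y
  have key : 0 ≤ (ν - νc) ^ 2 * ‖w‖ ^ 2 - 2 * ν * (ν - νc) * ⟪w, y⟫ + ν ^ 2 * ‖y‖ ^ 2 := by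
    rcases le_or_gt 0 ν with hν | hν
    · nlinarith [sq_nonneg ((ν - νc) * ‖w‖ - ν * ‖y‖),
        mul_le_mul_of_nonneg_left ht1 (by positivity : (0:ℝ) ≤ 2 * ν * (ν - νc))]
    · nlinarith [sq_nonneg ((ν - νc) * ‖w‖ + ν * ‖y‖),
        mul_le_mul_of_nonneg_left ht2 (by nlinarith : (0:ℝ) ≤ -(2 * ν * (ν - νc)))]
  have hfin : 0 ≤ (ν - νc) * ((ν - νc) * ‖w‖ ^ 2 - 2 * ν * ⟪w, y⟫ + (ρbar + ν - ρc) * ‖y‖ ^ 2) := by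
    nlinarith [mul_nonneg (sub_nonneg.mpr hc) (sq_nonneg ‖y‖)]
  have h5 : 0 ≤ (ν - νc) * ‖w‖ ^ 2 - 2 * ν * ⟪w, y⟫ + (ρbar + ν - ρc) * ‖y‖ ^ 2 :=
    nonneg_of_mul_nonneg_right hfin ha
  linarith

/-- Quadratic-form inequality used to establish the closed-loop passivity
indices `ν_c, ρ_c`. -/
theorem stmt_16 {m : ℕ} (νbar₁ νbar₂ ρbar₁ ρbar₂ νc ρc : ℝ)
    (h₁ : νc < νbar₁) (h₂ : νc < νbar₂)
    (h₃ : ρc ≤ ρbar₂ - νc * νbar₁ / (νbar₁ - νc))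
    (h₄ : ρc ≤ ρbar₁ - νc * νbar₂ / (νbar₂ - νc))
    (w₁ w₂ y₁ yhat₂ : EuclideanSpace ℝ (Fin m)) :
    νc * (‖w₁‖ ^ 2 + ‖w₂‖ ^ 2) + ρc * (‖y₁‖ ^ 2 + ‖yhat₂‖ ^ 2) ≤
      νbar₁ * ‖w₁‖ ^ 2 - 2 * νbar₁ * ⟪w₁, yhat₂⟫ + (ρbar₂ + νbar₁) * ‖yhat₂‖ ^ 2
        + νbar₂ * ‖w₂‖ ^ 2 + 2 * νbar₂ * ⟪w₂, y₁⟫ + (ρbar₁ + νbar₂) * ‖y₁‖ ^ 2 := by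
  have A := aux_16 νbar₁ ρbar₂ νc ρc h₁ h₃ w₁ yhat₂
  have B := aux_16 νbar₂ ρbar₁ νc ρc h₂ h₄ w₂ (-y₁)
  simp only [inner_neg_right, norm_neg] at B
  linarith
end

section
/- (Passivity of the closed-loop system with symbolic controller.) Let τ, μ > 0, m ∈ ℕ with m ≥ 1, ℓ₁, ℓ₂ > 0, ν̂₂ ≥ 0, ν̄₁, ρ̄₁, ρ̂₂, α̂, ν_c, ρ_c ∈ ℝ. Define ν̄₂ = ν̂₂(1 − 1/ℓ₂), ρ̄₂ = ρ̂₂ − 1/(4ℓ₁), ᾱ₂ = α̂ + τ(mμ²/4)(ℓ₁ + ν̂₂(ℓ₂ + 1)), and assume ν_c < ν̄₁, ν_c < ν̄₂, ρ_c ≤ ρ̄₂ − ν_c ν̄₁/(ν̄₁ − ν_c), ρ_c ≤ ρ̄₁ − ν_c ν̄₂/(ν̄₂ − ν_c). Let V₁ : ℝⁿ¹ → ℝ, V₂ : ℝⁿ² → ℝ, and let x₁ : ℕ → ℝⁿ¹, x̂₂ : ℕ → ℝⁿ², and w₁, w₂, y₁, ŷ₂, û₂ : ℕ → ℝᵐ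 be sequences. Assume for every k ∈ ℕ: (a) with u₁[k] := w₁[k] − ŷ₂[k], the plant inequality (1/τ)(V₁(x₁[k+1]) − V₁(x₁[k])) ≤ u₁[k]ᵀy₁[k] − ν̄₁‖u₁[k]‖₂² − ρ̄₁‖y₁[k]‖₂² holds; (b) the controller inequality (1/τ)(V₂(x̂₂[k+1]) − V₂(x̂₂[k])) ≤ û₂[k]ᵀŷ₂[k] − ν̂₂‖û₂[k]‖₂² − ρ̂₂‖ŷ₂[k]‖₂² + α̂/τ holds; (c) with u₂[k] := w₂[k] + y₁[k], ‖û₂[k] − u₂[k]‖₂ ≤ (√m)μ/2. Then, with V(k) := V₁(x₁[k]) + V₂(x̂₂[k]), w[k] := (w₁[k], w₂[k]) ∈ ℝ²ᵐ and y[k] := (y₁[k], ŷ₂[k]) ∈ ℝ²ᵐ, for every k ∈ ℕ: (1/τ)(V(k+1) − V(k)) ≤ w[k]ᵀy[k] − ν_c‖w[k]‖₂² − ρ_c‖y[k]‖₂² + ᾱ₂/τ. -/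
open scoped RealInnerProductSpace

-- Young-type cross term bound
lemma helper_young {m : ℕ} (ℓ : ℝ) (hℓ : 0 < ℓ) (e y : EuclideanSpace ℝ (Fin m)) :
    ⟪e, y⟫ ≤ ℓ * ‖e‖ ^ 2 + 1 / (4 * ℓ) * ‖y‖ ^ 2 := by
  rw [one_div_mul_eq_div]
  have h1 : ⟪e, y⟫ ≤ ‖e‖ * ‖y‖ := real_inner_le_norm e y
  have h2 : (‖e‖ * ‖y‖ - ℓ * ‖e‖ ^ 2) * (4 * ℓ) ≤ ‖y‖ ^ 2 := by
    nlinarith [sq_nonneg (2 * ℓ * ‖e‖ - ‖y‖)]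
  have h3 := (le_div_iff₀ (by positivity : (0:ℝ) < 4 * ℓ)).mpr h2
  linarith

-- lower bound on ‖a+b‖²
lemma helper_split {m : ℕ} (ℓ : ℝ) (hℓ : 0 < ℓ) (a b : EuclideanSpace ℝ (Fin m)) :
    (1 - 1 / ℓ) * ‖a‖ ^ 2 + (1 - ℓ) * ‖b‖ ^ 2 ≤ ‖a + b‖ ^ 2 := by
  have hexp : ‖a + b‖ ^ 2 = ‖a‖ ^ 2 + 2 * ⟪a, b⟫ + ‖b‖ ^ 2 := norm_add_sq_real a b
  have habs := abs_real_inner_le_norm a b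
  have ht2 : -(‖a‖ * ‖b‖) ≤ ⟪a, b⟫ := neg_le_of_abs_le habs
  have key : 2 * ‖a‖ * ‖b‖ - ℓ * ‖b‖ ^ 2 ≤ ‖a‖ ^ 2 / ℓ := by
    apply (le_div_iff₀ hℓ).mpr
    nlinarith [sq_nonneg (‖a‖ - ℓ * ‖b‖)]
  have hr : (1 - 1 / ℓ) * ‖a‖ ^ 2 = ‖a‖ ^ 2 - ‖a‖ ^ 2 / ℓ := by ring
  rw [hexp, hr]
  linarith

-- quadratic passivity combination bound
lemma helper_quad {m : ℕ} (ν νc : ℝ) (h : νc < ν) (a b : EuclideanSpace ℝ (Fin m)) :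
    νc * ‖a‖ ^ 2 - νc * ν / (ν - νc) * ‖b‖ ^ 2 ≤ ν * ‖a + b‖ ^ 2 := by
  have hc : (0:ℝ) < ν - νc := by linarith
  have hexp : ‖a + b‖ ^ 2 = ‖a‖ ^ 2 + 2 * ⟪a, b⟫ + ‖b‖ ^ 2 := norm_add_sq_real a b
  have habs := abs_real_inner_le_norm a b
  have ht1 : ⟪a, b⟫ ≤ ‖a‖ * ‖b‖ := le_of_abs_le habs
  have ht2 : -(‖a‖ * ‖b‖) ≤ ⟪a, b⟫ := neg_le_of_abs_le habs
  have key : (νc * ‖a‖ ^ 2 - ν * ‖a + b‖ ^ 2) * (ν - νc) ≤ νc * ν * ‖b‖ ^ 2 := by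
    rw [hexp]
    rcases le_or_gt 0 ν with hν | hν
    · nlinarith [sq_nonneg ((ν - νc) * ‖a‖ - ν * ‖b‖),
        mul_nonneg (mul_nonneg hν hc.le) (by linarith : (0:ℝ) ≤ ⟪a, b⟫ + ‖a‖ * ‖b‖)]
    · nlinarith [sq_nonneg ((ν - νc) * ‖a‖ + ν * ‖b‖),
        mul_nonneg (mul_nonneg (by linarith : (0:ℝ) ≤ -ν) hc.le) (by linarith : (0:ℝ) ≤ ‖a‖ * ‖b‖ - ⟪a, b⟫)]
  have h3 := (le_div_iff₀ hc).mpr key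
  have h4 : νc * ν * ‖b‖ ^ 2 / (ν - νc) = νc * ν / (ν - νc) * ‖b‖ ^ 2 := by ring
  linarith [h3.trans_eq h4]

/-- Passivity of the closed-loop system composed of a continuous plant (with
degraded passivity indices `ν̄₁, ρ̄₁`) and a symbolic controller (with degraded
quasi-passivity indices `ν̂₂, ρ̂₂` and bias `α̂`), interconnected in feedback with
quantization of the controller input. The ℝ²ᵐ inner product and norm are written
componentwise: `wᵀy = w₁ᵀy₁ + w₂ᵀŷ₂`, `‖w‖² = ‖w₁‖² + ‖w₂‖²`, `‖y‖² = ‖y₁‖² + ‖ŷ₂‖²`. -/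
theorem stmt_17 {n₁ n₂ m : ℕ} (τ μ : ℝ) (hτ : 0 < τ) (hμ : 0 < μ) (hm : 1 ≤ m)
    (ℓ₁ ℓ₂ : ℝ) (hℓ₁ : 0 < ℓ₁) (hℓ₂ : 0 < ℓ₂)
    (νhat₂ : ℝ) (hνhat₂ : 0 ≤ νhat₂) (νbar₁ ρbar₁ ρhat₂ αhat νc ρc : ℝ)
    (hc₁ : νc < νbar₁) (hc₂ : νc < νhat₂ * (1 - 1 / ℓ₂))
    (hc₃ : ρc ≤ (ρhat₂ - 1 / (4 * ℓ₁)) - νc * νbar₁ / (νbar₁ - νc))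
    (hc₄ : ρc ≤ ρbar₁ - νc * (νhat₂ * (1 - 1 / ℓ₂)) / (νhat₂ * (1 - 1 / ℓ₂) - νc))
    (V₁ : EuclideanSpace ℝ (Fin n₁) → ℝ) (V₂ : EuclideanSpace ℝ (Fin n₂) → ℝ)
    (x₁ : ℕ → EuclideanSpace ℝ (Fin n₁)) (xhat₂ : ℕ → EuclideanSpace ℝ (Fin n₂))
    (w₁ w₂ y₁ yhat₂ uhat₂ : ℕ → EuclideanSpace ℝ (Fin m))
    -- (a) plant passivity inequality with input u₁ = w₁ − ŷ₂
    (hplant : ∀ k : ℕ, (1 / τ) * (V₁ (x₁ (k + 1)) - V₁ (x₁ k)) ≤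
      ⟪w₁ k - yhat₂ k, y₁ k⟫ - νbar₁ * ‖w₁ k - yhat₂ k‖ ^ 2 - ρbar₁ * ‖y₁ k‖ ^ 2)
    -- (b) controller quasi-passivity inequality
    (hctrl : ∀ k : ℕ, (1 / τ) * (V₂ (xhat₂ (k + 1)) - V₂ (xhat₂ k)) ≤
      ⟪uhat₂ k, yhat₂ k⟫ - νhat₂ * ‖uhat₂ k‖ ^ 2 - ρhat₂ * ‖yhat₂ k‖ ^ 2 + αhat / τ)
    -- (c) quantization of the feedback signal u₂ = w₂ + y₁
    (hq : ∀ k : ℕ, ‖uhat₂ k - (w₂ k + y₁ k)‖ ≤ Real.sqrt m * μ / 2) :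
    ∀ k : ℕ,
      (1 / τ) * ((V₁ (x₁ (k + 1)) + V₂ (xhat₂ (k + 1))) - (V₁ (x₁ k) + V₂ (xhat₂ k))) ≤
        (⟪w₁ k, y₁ k⟫ + ⟪w₂ k, yhat₂ k⟫)
          - νc * (‖w₁ k‖ ^ 2 + ‖w₂ k‖ ^ 2)
          - ρc * (‖y₁ k‖ ^ 2 + ‖yhat₂ k‖ ^ 2)
          + (αhat + τ * (m * μ ^ 2 / 4) * (ℓ₁ + νhat₂ * (ℓ₂ + 1))) / τ := by

  intro k
  set e : EuclideanSpace ℝ (Fin m) := uhat₂ k - (w₂ k + y₁ k) with he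
  set q : ℝ := (m : ℝ) * μ ^ 2 / 4 with hqdef
  have hq0 : 0 ≤ q := by positivity
  -- quantization error bound squared
  have hE : ‖e‖ ^ 2 ≤ q := by
    have h1 := hq k
    have h2 : (Real.sqrt m * μ / 2) ^ 2 = q := by
      rw [div_pow, mul_pow, Real.sq_sqrt (Nat.cast_nonneg m : (0:ℝ) ≤ m)]
      rw [hqdef]; ring
    nlinarith [norm_nonneg e, Real.sqrt_nonneg (m : ℝ), hμ.le]
  have hu : uhat₂ k = (w₂ k + y₁ k) + e := by rw [he]; abel
  -- inner product expansions
  have hip1 : ⟪w₁ k - yhat₂ k, y₁ k⟫ = ⟪w₁ k, y₁ k⟫ - ⟪y₁ k, yhat₂ k⟫ := by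
    rw [inner_sub_left, real_inner_comm (yhat₂ k) (y₁ k)]
  have hip2 : ⟪uhat₂ k, yhat₂ k⟫ = ⟪w₂ k, yhat₂ k⟫ + ⟪y₁ k, yhat₂ k⟫ + ⟪e, yhat₂ k⟫ := by
    rw [hu, inner_add_left, inner_add_left]
  -- Young bound on cross term
  have hY : ⟪e, yhat₂ k⟫ ≤ ℓ₁ * ‖e‖ ^ 2 + 1 / (4 * ℓ₁) * ‖yhat₂ k‖ ^ 2 := helper_young ℓ₁ hℓ₁ e (yhat₂ k)
  have hEq : ℓ₁ * ‖e‖ ^ 2 ≤ ℓ₁ * q := mul_le_mul_of_nonneg_left hE hℓ₁.le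
  -- splitting bound for the controller input
  have hB : (1 - 1 / ℓ₂) * ‖w₂ k + y₁ k‖ ^ 2 + (1 - ℓ₂) * ‖e‖ ^ 2 ≤ ‖uhat₂ k‖ ^ 2 := by
    rw [hu]; exact helper_split ℓ₂ hℓ₂ (w₂ k + y₁ k) e
  have hν : νhat₂ * ((1 - 1 / ℓ₂) * ‖w₂ k + y₁ k‖ ^ 2 + (1 - ℓ₂) * ‖e‖ ^ 2) ≤ νhat₂ * ‖uhat₂ k‖ ^ 2 :=
    mul_le_mul_of_nonneg_left hB hνhat₂
  have hν2 : νhat₂ * ((ℓ₂ - 1) * ‖e‖ ^ 2) ≤ νhat₂ * ((ℓ₂ + 1) * q) := by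
    apply mul_le_mul_of_nonneg_left _ hνhat₂
    nlinarith [sq_nonneg ‖e‖, mul_nonneg hℓ₂.le (sub_nonneg.mpr hE)]
  -- quadratic passivity bounds
  have hC1 : νc * ‖w₁ k‖ ^ 2 - νc * νbar₁ / (νbar₁ - νc) * ‖yhat₂ k‖ ^ 2 ≤
      νbar₁ * ‖w₁ k - yhat₂ k‖ ^ 2 := by
    have := helper_quad νbar₁ νc hc₁ (w₁ k) (-(yhat₂ k))
    rwa [norm_neg, ← sub_eq_add_neg] at this
  have hC2 : νc * ‖w₂ k‖ ^ 2 - νc * (νhat₂ * (1 - 1 / ℓ₂)) / (νhat₂ * (1 - 1 / ℓ₂) - νc) * ‖y₁ k‖ ^ 2 ≤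
      νhat₂ * (1 - 1 / ℓ₂) * ‖w₂ k + y₁ k‖ ^ 2 :=
    helper_quad (νhat₂ * (1 - 1 / ℓ₂)) νc hc₂ (w₂ k) (y₁ k)
  -- ρc bounds
  have hρ1 : ρc * ‖yhat₂ k‖ ^ 2 ≤
      ((ρhat₂ - 1 / (4 * ℓ₁)) - νc * νbar₁ / (νbar₁ - νc)) * ‖yhat₂ k‖ ^ 2 :=
    mul_le_mul_of_nonneg_right hc₃ (sq_nonneg _)
  have hρ2 : ρc * ‖y₁ k‖ ^ 2 ≤
      (ρbar₁ - νc * (νhat₂ * (1 - 1 / ℓ₂)) / (νhat₂ * (1 - 1 / ℓ₂) - νc)) * ‖y₁ k‖ ^ 2 :=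
    mul_le_mul_of_nonneg_right hc₄ (sq_nonneg _)
  -- bias rewriting
  have hbias : (αhat + τ * q * (ℓ₁ + νhat₂ * (ℓ₂ + 1))) / τ
      = αhat / τ + ℓ₁ * q + νhat₂ * ((ℓ₂ + 1) * q) := by
    rw [hqdef]; field_simp; ring
  have hP := hplant k
  have hC := hctrl k
  rw [hip1] at hP
  rw [hip2] at hC
  rw [hbias]
  linarith [hP, hC, hY, hEq, hν, hν2, hC1, hC2, hρ1, hρ2]
end

section
/- (Zero external input: output decrease of the closed loop.) Let τ, μ > 0, m ∈ ℕ with m ≥ 1, ℓ₁, ℓ₂ > 0, ν̂₂ ≥ 0, ν̄₁, ρ̄₁, ρ̂₂, α̂ ∈ ℝ. Define ν̄₂ = ν̂₂(1 − 1/ℓ₂), ρ̄₂ = ρ̂₂ − 1/(4ℓ₁), ᾱ₂ = α̂ + τ(mμ²/4)(ℓ₁ + ν̂₂(ℓ₂ + 1)). Let V₁ : ℝⁿ¹ → ℝ, V₂ : ℝⁿ² → ℝ, and let x₁ : ℕ → ℝⁿ¹, x̂₂ : ℕ → ℝⁿ², and y₁, ŷ₂, û₂ : ℕ → ℝᵐ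 be sequences. Assume for every k ∈ ℕ: (a) (1/τ)(V₁(x₁[k+1]) − V₁(x₁[k])) ≤ (−ŷ₂[k])ᵀy₁[k] − ν̄₁‖ŷ₂[k]‖₂² − ρ̄₁‖y₁[k]‖₂²; (b) (1/τ)(V₂(x̂₂[k+1]) − V₂(x̂₂[k])) ≤ û₂[k]ᵀŷ₂[k] − ν̂₂‖û₂[k]‖₂² − ρ̂₂‖ŷ₂[k]‖₂² + α̂/τ; (c) ‖û₂[k] − y₁[k]‖₂ ≤ (√m)μ/2. Then, with V(k) := V₁(x₁[k]) + V₂(x̂₂[k]), for every k ∈ ℕ: (1/τ)(V(k+1) − V(k)) ≤ −min{ν̄₂ + ρ̄₁, ν̄₁ + ρ̄₂}(‖y₁[k]‖₂² + ‖ŷ₂[k]‖₂²) + ᾱ₂/τ. -/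
open scoped RealInnerProductSpace

/-!
Adding the two dissipation inequalities, the cross terms `⟪-ŷ₂, y₁⟫ + ⟪û₂, ŷ₂⟫` collapse to
`⟪û₂ - y₁, ŷ₂⟫`, an inner product with the quantization error. Young's inequality with weight `ℓ₁`
splits it into `ℓ₁‖û₂ - y₁‖²` and `‖ŷ₂‖² / (4ℓ₁)`, and a weighted triangle inequality with
weight `ℓ₂` trades the controller's `-ν̂₂‖û₂‖²` for `-ν̂₂(1 - 1/ℓ₂)‖y₁‖²` plus another multiple
of the error. The error terms are bounded by `mμ²/4` through the quantization bound.
-/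

theorem mul_le_mul_sq_add_sq_div_four_mul {s t ℓ : ℝ} (hℓ : 0 < ℓ) :
    s * t ≤ ℓ * s ^ 2 + t ^ 2 / (4 * ℓ) := by
  have key : ℓ * s ^ 2 + t ^ 2 / (4 * ℓ) - s * t = (2 * ℓ * s - t) ^ 2 / (4 * ℓ) := by
    field_simp
    ring
  have : 0 ≤ (2 * ℓ * s - t) ^ 2 / (4 * ℓ) := by positivity
  linarith

theorem real_inner_le_mul_norm_sq_add_sq_div_four_mul {F : Type*} [NormedAddCommGroup F]
    [InnerProductSpace ℝ F] {ℓ : ℝ} (hℓ : 0 < ℓ) (x y : F) :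
    ⟪x, y⟫ ≤ ℓ * ‖x‖ ^ 2 + ‖y‖ ^ 2 / (4 * ℓ) :=
  (real_inner_le_norm x y).trans (mul_le_mul_sq_add_sq_div_four_mul hℓ)

theorem one_sub_inv_mul_norm_sq_le {E : Type*} [SeminormedAddCommGroup E] {ℓ : ℝ}
    (hℓ : 0 < ℓ) (u a : E) :
    (1 - 1 / ℓ) * ‖a‖ ^ 2 ≤ ‖u‖ ^ 2 + (ℓ + 1) * ‖u - a‖ ^ 2 := by
  set A := ‖a‖
  set U := ‖u‖
  set e := ‖u - a‖
  have hA : 0 ≤ A := norm_nonneg _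
  have hU : 0 ≤ U := norm_nonneg _
  have he : 0 ≤ e := norm_nonneg _
  have htri : A ≤ U + e := by
    simpa [sub_sub_cancel] using norm_sub_le u (u - a)
  suffices (ℓ - 1) * A ^ 2 ≤ ℓ * U ^ 2 + ℓ * (ℓ + 1) * e ^ 2 by
    rw [show (1 - 1 / ℓ) * A ^ 2 = (ℓ - 1) * A ^ 2 / ℓ by field_simp, div_le_iff₀ hℓ]
    linarith
  rcases le_or_gt 1 ℓ with hℓ1 | hℓ1
  · have hsq : A ^ 2 ≤ (U + e) ^ 2 := pow_le_pow_left₀ hA htri 2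
    -- `2(ℓ-1)Ue ≤ U² + (ℓ-1)²e²` absorbs the cross term of `(U + e)²`
    nlinarith [mul_le_mul_of_nonneg_left hsq (sub_nonneg.2 hℓ1), sq_nonneg (U - (ℓ - 1) * e)]
  · have hneg : (ℓ - 1) * A ^ 2 ≤ 0 := mul_nonpos_of_nonpos_of_nonneg (by linarith) (sq_nonneg A)
    have hpos : 0 ≤ ℓ * U ^ 2 + ℓ * (ℓ + 1) * e ^ 2 := by positivity
    linarith

theorem min_mul_add_le {c d x y : ℝ} (hx : 0 ≤ x) (hy : 0 ≤ y) :
    min c d * (x + y) ≤ c * x + d * y := by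
  rw [mul_add]
  exact add_le_add (mul_le_mul_of_nonneg_right (min_le_left c d) hx)
    (mul_le_mul_of_nonneg_right (min_le_right c d) hy)

theorem closedLoop_supply_le {F : Type*} [NormedAddCommGroup F] [InnerProductSpace ℝ F]
    {ℓ₁ ℓ₂ νhat₂ νbar₁ ρbar₁ ρhat₂ : ℝ} (hℓ₁ : 0 < ℓ₁) (hℓ₂ : 0 < ℓ₂) (hνhat₂ : 0 ≤ νhat₂)
    (y yhat u : F) :
    (⟪-yhat, y⟫ - νbar₁ * ‖yhat‖ ^ 2 - ρbar₁ * ‖y‖ ^ 2)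
        + (⟪u, yhat⟫ - νhat₂ * ‖u‖ ^ 2 - ρhat₂ * ‖yhat‖ ^ 2) ≤
      -min (νhat₂ * (1 - 1 / ℓ₂) + ρbar₁) (νbar₁ + (ρhat₂ - 1 / (4 * ℓ₁)))
          * (‖y‖ ^ 2 + ‖yhat‖ ^ 2)
        + (ℓ₁ + νhat₂ * (ℓ₂ + 1)) * ‖u - y‖ ^ 2 := by
  have hcross : ⟪-yhat, y⟫ + ⟪u, yhat⟫ = ⟪u - y, yhat⟫ := by
    rw [inner_neg_left, inner_sub_left, real_inner_comm yhat y]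
    ring
  have hyoung := real_inner_le_mul_norm_sq_add_sq_div_four_mul hℓ₁ (u - y) yhat
  have hctrl := mul_le_mul_of_nonneg_left (one_sub_inv_mul_norm_sq_le hℓ₂ u y) hνhat₂
  have hmin := min_mul_add_le (c := νhat₂ * (1 - 1 / ℓ₂) + ρbar₁)
    (d := νbar₁ + (ρhat₂ - 1 / (4 * ℓ₁))) (sq_nonneg ‖y‖) (sq_nonneg ‖yhat‖)
  have hdiv : ‖yhat‖ ^ 2 / (4 * ℓ₁) = 1 / (4 * ℓ₁) * ‖yhat‖ ^ 2 := by ring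
  linarith

theorem norm_sq_le_of_norm_le_sqrt_mul {F : Type*} [SeminormedAddCommGroup F] {e : F}
    {m μ : ℝ} (hm : 0 ≤ m) (he : ‖e‖ ≤ Real.sqrt m * μ / 2) :
    ‖e‖ ^ 2 ≤ m * μ ^ 2 / 4 := by
  calc ‖e‖ ^ 2 ≤ (Real.sqrt m * μ / 2) ^ 2 := pow_le_pow_left₀ (norm_nonneg e) he 2
    _ = m * μ ^ 2 / 4 := by rw [div_pow, mul_pow, Real.sq_sqrt hm]; ring

theorem stmt_18_general {n₁ n₂ m : ℕ} (τ μ : ℝ) (hτ : 0 < τ)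
    (ℓ₁ ℓ₂ : ℝ) (hℓ₁ : 0 < ℓ₁) (hℓ₂ : 0 < ℓ₂)
    (νhat₂ : ℝ) (hνhat₂ : 0 ≤ νhat₂) (νbar₁ ρbar₁ ρhat₂ αhat : ℝ)
    (V₁ : EuclideanSpace ℝ (Fin n₁) → ℝ) (V₂ : EuclideanSpace ℝ (Fin n₂) → ℝ)
    (x₁ : ℕ → EuclideanSpace ℝ (Fin n₁)) (xhat₂ : ℕ → EuclideanSpace ℝ (Fin n₂))
    (y₁ yhat₂ uhat₂ : ℕ → EuclideanSpace ℝ (Fin m))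
    -- (a) plant passivity inequality with input −ŷ₂
    (hplant : ∀ k : ℕ, (1 / τ) * (V₁ (x₁ (k + 1)) - V₁ (x₁ k)) ≤
      ⟪-yhat₂ k, y₁ k⟫ - νbar₁ * ‖yhat₂ k‖ ^ 2 - ρbar₁ * ‖y₁ k‖ ^ 2)
    -- (b) controller quasi-passivity inequality
    (hctrl : ∀ k : ℕ, (1 / τ) * (V₂ (xhat₂ (k + 1)) - V₂ (xhat₂ k)) ≤
      ⟪uhat₂ k, yhat₂ k⟫ - νhat₂ * ‖uhat₂ k‖ ^ 2 - ρhat₂ * ‖yhat₂ k‖ ^ 2 + αhat / τ)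
    -- (c) quantization of the feedback signal y₁
    (hq : ∀ k : ℕ, ‖uhat₂ k - y₁ k‖ ≤ Real.sqrt m * μ / 2) :
    ∀ k : ℕ,
      (1 / τ) * ((V₁ (x₁ (k + 1)) + V₂ (xhat₂ (k + 1))) - (V₁ (x₁ k) + V₂ (xhat₂ k))) ≤
        -min (νhat₂ * (1 - 1 / ℓ₂) + ρbar₁) (νbar₁ + (ρhat₂ - 1 / (4 * ℓ₁)))
            * (‖y₁ k‖ ^ 2 + ‖yhat₂ k‖ ^ 2)
          + (αhat + τ * (m * μ ^ 2 / 4) * (ℓ₁ + νhat₂ * (ℓ₂ + 1))) / τ := by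
  intro k
  have hsupply := closedLoop_supply_le (νbar₁ := νbar₁) (ρbar₁ := ρbar₁) (ρhat₂ := ρhat₂)
    hℓ₁ hℓ₂ hνhat₂ (y₁ k) (yhat₂ k) (uhat₂ k)
  have herror := mul_le_mul_of_nonneg_left
    (norm_sq_le_of_norm_le_sqrt_mul (Nat.cast_nonneg m) (hq k))
    (by positivity : 0 ≤ ℓ₁ + νhat₂ * (ℓ₂ + 1))
  have hconst : (αhat + τ * (m * μ ^ 2 / 4) * (ℓ₁ + νhat₂ * (ℓ₂ + 1))) / τ
      = αhat / τ + (ℓ₁ + νhat₂ * (ℓ₂ + 1)) * (m * μ ^ 2 / 4) := by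
    field_simp
  rw [hconst, mul_sub, mul_add, mul_add]
  have := hplant k
  have := hctrl k
  linarith

/-- With zero external inputs, the closed loop of the plant (degraded indices
`ν̄₁, ρ̄₁`) and the symbolic controller (degraded indices `ν̂₂, ρ̂₂`, bias `α̂`)
satisfies an output-decrease inequality. -/
theorem stmt_18 {n₁ n₂ m : ℕ} (τ μ : ℝ) (hτ : 0 < τ) (hμ : 0 < μ) (hm : 1 ≤ m)
    (ℓ₁ ℓ₂ : ℝ) (hℓ₁ : 0 < ℓ₁) (hℓ₂ : 0 < ℓ₂)
    (νhat₂ : ℝ) (hνhat₂ : 0 ≤ νhat₂) (νbar₁ ρbar₁ ρhat₂ αhat : ℝ)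
    (V₁ : EuclideanSpace ℝ (Fin n₁) → ℝ) (V₂ : EuclideanSpace ℝ (Fin n₂) → ℝ)
    (x₁ : ℕ → EuclideanSpace ℝ (Fin n₁)) (xhat₂ : ℕ → EuclideanSpace ℝ (Fin n₂))
    (y₁ yhat₂ uhat₂ : ℕ → EuclideanSpace ℝ (Fin m))
    -- (a) plant passivity inequality with input −ŷ₂
    (hplant : ∀ k : ℕ, (1 / τ) * (V₁ (x₁ (k + 1)) - V₁ (x₁ k)) ≤
      ⟪-yhat₂ k, y₁ k⟫ - νbar₁ * ‖yhat₂ k‖ ^ 2 - ρbar₁ * ‖y₁ k‖ ^ 2)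
    -- (b) controller quasi-passivity inequality
    (hctrl : ∀ k : ℕ, (1 / τ) * (V₂ (xhat₂ (k + 1)) - V₂ (xhat₂ k)) ≤
      ⟪uhat₂ k, yhat₂ k⟫ - νhat₂ * ‖uhat₂ k‖ ^ 2 - ρhat₂ * ‖yhat₂ k‖ ^ 2 + αhat / τ)
    -- (c) quantization of the feedback signal y₁
    (hq : ∀ k : ℕ, ‖uhat₂ k - y₁ k‖ ≤ Real.sqrt m * μ / 2) :
    ∀ k : ℕ,
      (1 / τ) * ((V₁ (x₁ (k + 1)) + V₂ (xhat₂ (k + 1))) - (V₁ (x₁ k) + V₂ (xhat₂ k))) ≤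
        -min (νhat₂ * (1 - 1 / ℓ₂) + ρbar₁) (νbar₁ + (ρhat₂ - 1 / (4 * ℓ₁)))
            * (‖y₁ k‖ ^ 2 + ‖yhat₂ k‖ ^ 2)
          + (αhat + τ * (m * μ ^ 2 / 4) * (ℓ₁ + νhat₂ * (ℓ₂ + 1))) / τ :=
  stmt_18_general τ μ hτ ℓ₁ ℓ₂ hℓ₁ hℓ₂ νhat₂ hνhat₂ νbar₁ ρbar₁ ρhat₂ αhat V₁ V₂ x₁ xhat₂ y₁ yhat₂
    uhat₂ hplant hctrl hq
end
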